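/- arXiv:2604.22412 — 7 statements merged into one kernel-verified Lean document; each statement's English description precedes it below -/
import Mathlib

section
/- For every k : ℕ → ℕ, the class UE(k) is compact in the space of marked groups: if (N_n) is a sequence of normal subgroups of the free group F_d on d generators converging to a normal subgroup N_∞, and if every quotient group Γ_n := F_d/N_n has k as a modulus of uniform exactness, then the limit group Γ_∞ := F_d/N_∞ also has k as a modulus of uniform exactness. -/
open scoped Pointwise
open Filter Function

lemma ulim_exists (U : Ultrafilter ℕ) {f : ℕ → ℝ} {a b : ℝ}
    (h : ∀ n, f n ∈ Set.Icc a b) :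
    ∃ c ∈ Set.Icc a b, Filter.Tendsto f ↑U (nhds c) := by
  obtain ⟨c, hc, hle⟩ := isCompact_Icc.ultrafilter_le_nhds (U.map f)
    (by rw [Ultrafilter.coe_map, Filter.le_principal_iff, Filter.mem_map]
        exact Filter.univ_mem' h)
  exact ⟨c, hc, by rwa [Ultrafilter.coe_map] at hle⟩

lemma sum_le_finsum_of_nonneg {α : Type*} {f : α → ℝ} (A : Finset α) {B : Finset α}
    (h0 : ∀ a, 0 ≤ f a) (hs : Function.support f ⊆ ↑B) :
    ∑ a ∈ A, f a ≤ ∑ᶠ a, f a := by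
  classical
  rw [finsum_eq_sum_of_support_subset f (s := A ∪ B) (hs.trans (by simp))]
  exact Finset.sum_le_sum_of_subset_of_nonneg Finset.subset_union_left (fun i _ _ => h0 i)

def IsUEModulus (k : ℕ → ℕ) (Γ : Type*) [Group Γ] : Prop :=
  ∀ F : Finset Γ, (1 : Γ) ∈ F → (∀ t ∈ F, t⁻¹ ∈ F) →
    ∃ η : Γ → Γ → ℝ,
      (∀ x t, 0 ≤ η x t) ∧
      (∀ x, Function.support (η x) ⊆ (F : Set Γ) ^ k F.card) ∧
      (∀ x, ∑ᶠ t, η x t = 1) ∧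
      (∑ s ∈ F, ⨆ x : Γ, ∑ᶠ t, |η (s * x) t - η x (s⁻¹ * t)|) ≤ 1 / (F.card : ℝ)

/-- The class `UE(k)` is compact in the space of marked groups: if a sequence of
normal subgroups `N n ⊴ F_d` converges to `N∞` (pointwise eventual membership) and
every quotient `F_d ⧸ N n` has `k` as a modulus of uniform exactness, then so does
the limit `F_d ⧸ N∞`. -/
theorem isUEModulus_of_markedGroup_limit
    (k : ℕ → ℕ) (d : ℕ)
    (N : ℕ → Subgroup (FreeGroup (Fin d))) [∀ n, (N n).Normal]
    (Ninf : Subgroup (FreeGroup (Fin d))) [Ninf.Normal]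
    (hconv : ∀ w : FreeGroup (Fin d),
      (∀ᶠ n in Filter.atTop, w ∈ N n) ∨ (∀ᶠ n in Filter.atTop, w ∉ N n))
    (hlim : ∀ w : FreeGroup (Fin d), w ∈ Ninf ↔ ∀ᶠ n in Filter.atTop, w ∈ N n)
    (hUE : ∀ n, IsUEModulus k (FreeGroup (Fin d) ⧸ N n)) :
    IsUEModulus k (FreeGroup (Fin d) ⧸ Ninf) := by
  classical
  intro F h1F hsymF
  set G := FreeGroup (Fin d) with hG
  -- a section of the quotient map
  obtain ⟨σ, hσ⟩ : ∃ σ : G ⧸ Ninf → G, ∀ x, ((σ x : G) : G ⧸ Ninf) = x :=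
    ⟨Function.surjInv (QuotientGroup.mk'_surjective (N := Ninf)),
     fun x => Function.surjInv_eq _ x⟩
  -- eventual membership facts
  have hin : ∀ w : G, w ∈ Ninf → ∀ᶠ n in atTop, w ∈ N n := fun w hw => (hlim w).1 hw
  have hout : ∀ w : G, w ∉ Ninf → ∀ᶠ n in atTop, w ∉ N n := by
    intro w hw
    rcases hconv w with h | h
    · exact absurd ((hlim w).2 h) hw
    · exact h
  have hEq : ∀ u v : G, ((u : G ⧸ Ninf) = (v : G ⧸ Ninf)) →
      ∀ᶠ n in atTop, ((u : G ⧸ N n) = (v : G ⧸ N n)) := by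
    intro u v huv
    have h1 : u⁻¹ * v ∈ Ninf := QuotientGroup.eq.1 huv
    exact (hin _ h1).mono fun n hn => QuotientGroup.eq.2 hn
  have hNe : ∀ u v : G, ((u : G ⧸ Ninf) ≠ (v : G ⧸ Ninf)) →
      ∀ᶠ n in atTop, ((u : G ⧸ N n) ≠ (v : G ⧸ N n)) := by
    intro u v huv
    have h1 : u⁻¹ * v ∉ Ninf := fun h => huv (QuotientGroup.eq.2 h)
    exact (hout _ h1).mono fun n hn h => hn (QuotientGroup.eq.1 h)
  -- notation
  set m : ℕ := k F.card with hm
  set T' : Finset (G ⧸ Ninf) := F ∪ F ^ m ∪ F * F ^ m with hT'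
  have hFT' : ∀ t ∈ F, t ∈ T' := fun t ht => by
    simp [hT', ht]
  have hTT' : ∀ t ∈ F ^ m, t ∈ T' := fun t ht => by
    simp [hT', ht]
  -- transferred data
  let gQ : ∀ n : ℕ, (G ⧸ Ninf) → (G ⧸ N n) := fun n x => ((σ x : G) : G ⧸ N n)
  let Fn : ∀ n : ℕ, Finset (G ⧸ N n) := fun n => F.image (gQ n)
  let W : Finset G := F.image σ
  -- bundled quotient maps
  let πn : ∀ n : ℕ, G →* G ⧸ N n := fun n => QuotientGroup.mk' (N n)
  let pI : G →* G ⧸ Ninf := QuotientGroup.mk' Ninf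
  have hπσ : ⇑pI ∘ σ = id := funext fun x => hσ x
  have hWimg : W.image ⇑pI = F := by
    rw [Finset.image_image, hπσ, Finset.image_id]
  have hWF : ∀ w ∈ (W ^ m : Finset G), ((w : G ⧸ Ninf)) ∈ (F ^ m : Finset (G ⧸ Ninf)) := by
    intro w hw
    have h1 : (W ^ m).image ⇑pI = F ^ m := by rw [Finset.image_pow, hWimg]
    rw [← h1]
    exact Finset.mem_image_of_mem _ hw
  have hFnW : ∀ n j, (Fn n : Finset (G ⧸ N n)) ^ j = (W ^ j).image ⇑(πn n) := by
    intro n j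
    rw [Finset.image_pow]
    congr 1
    rw [Finset.image_image]
    rfl
  -- the key eventual "good" properties
  have hInj : ∀ᶠ n in atTop, ∀ t ∈ T', ∀ t' ∈ T', gQ n t = gQ n t' → t = t' := by
    rw [eventually_all_finset]
    intro t ht
    rw [eventually_all_finset]
    intro t' ht'
    by_cases h : t = t'
    · exact Filter.Eventually.of_forall fun n _ => h
    · exact (hNe (σ t) (σ t') (by rw [hσ, hσ]; exact h)).mono fun n hn hq => absurd hq hn
  have hOne : ∀ᶠ n in atTop, (1 : G ⧸ N n) ∈ Fn n := by
    refine (hin (σ 1) ((QuotientGroup.eq_one_iff _).1 (hσ 1))).mono fun n hn => ?_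
    have h1 : gQ n (1 : G ⧸ Ninf) = 1 := (QuotientGroup.eq_one_iff _).2 hn
    rw [← h1]
    exact Finset.mem_image_of_mem _ h1F
  have hSymEv : ∀ᶠ n in atTop, ∀ t ∈ F, gQ n t⁻¹ = (gQ n t)⁻¹ := by
    rw [eventually_all_finset]
    intro t ht
    refine (hEq (σ t⁻¹) ((σ t)⁻¹) ?_).mono fun n hn => ?_
    · rw [hσ, QuotientGroup.mk_inv, hσ]
    · rw [show gQ n t⁻¹ = ((σ t⁻¹ : G) : G ⧸ N n) from rfl, hn, QuotientGroup.mk_inv]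
  have hSym : ∀ᶠ n in atTop, ∀ u ∈ Fn n, u⁻¹ ∈ Fn n := by
    refine hSymEv.mono fun n hn u hu => ?_
    obtain ⟨t, htF, rfl⟩ := Finset.mem_image.1 hu
    rw [← hn t htF]
    exact Finset.mem_image_of_mem _ (hsymF t htF)
  have hCard : ∀ᶠ n in atTop, (Fn n).card = F.card := by
    refine hInj.mono fun n hn => ?_
    exact Finset.card_image_of_injOn fun t ht t' ht' hq => hn t (hFT' t ht) t' (hFT' t' ht') hq
  have hCover : ∀ᶠ n in atTop, ∀ w ∈ (W ^ m : Finset G),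
      ((w : G ⧸ N n)) = gQ n ((w : G ⧸ Ninf)) := by
    rw [eventually_all_finset]
    intro w hw
    exact hEq w (σ ((w : G ⧸ Ninf))) (by rw [hσ])
  have hMulL : ∀ᶠ n in atTop, ∀ s ∈ F, ∀ t ∈ T',
      gQ n (s⁻¹ * t) = (gQ n s)⁻¹ * gQ n t := by
    rw [eventually_all_finset]
    intro s hs
    rw [eventually_all_finset]
    intro t ht
    refine (hEq (σ (s⁻¹ * t)) ((σ s)⁻¹ * σ t) ?_).mono fun n hn => ?_
    · rw [hσ, QuotientGroup.mk_mul, QuotientGroup.mk_inv, hσ, hσ]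
    · rw [show gQ n (s⁻¹ * t) = ((σ (s⁻¹ * t) : G) : G ⧸ N n) from rfl, hn,
        QuotientGroup.mk_mul, QuotientGroup.mk_inv]
  -- choose the approximating data in each quotient
  set D : ℕ → Prop := fun n => (1 : G ⧸ N n) ∈ Fn n ∧ ∀ u ∈ Fn n, u⁻¹ ∈ Fn n with hD
  have hη'ex : ∀ n, ∃ e : (G ⧸ N n) → (G ⧸ N n) → ℝ,
      (∀ x t, 0 ≤ e x t) ∧ (∀ x t, e x t ≤ 1) ∧
      (¬ D n → ∀ x t, e x t = 0) ∧
      (D n →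
        ((∀ x, Function.support (e x) ⊆ ((Fn n : Set (G ⧸ N n))) ^ k (Fn n).card) ∧
         (∀ x, ∑ᶠ t, e x t = 1) ∧
         ((∑ s ∈ Fn n, ⨆ x, ∑ᶠ t, |e (s * x) t - e x (s⁻¹ * t)|) ≤ 1 / ((Fn n).card : ℝ)))) := by
    intro n
    by_cases h : D n
    · obtain ⟨e, h1, h2, h3, h4⟩ := hUE n (Fn n) h.1 h.2
      refine ⟨e, h1, fun x t => ?_, fun hn => absurd h hn, fun _ => ⟨h2, h3, h4⟩⟩
      calc e x t ≤ ∑ᶠ t', e x t' := by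
            refine single_le_finsum t ?_ (h1 x)
            refine Set.Finite.subset ?_ (h2 x)
            rw [← Finset.coe_pow]
            exact (Fn n ^ k (Fn n).card).finite_toSet
        _ = 1 := h3 x
    · exact ⟨fun _ _ => 0, fun _ _ => le_refl 0, fun _ _ => zero_le_one,
        fun _ _ _ => rfl, fun hDn => absurd hDn h⟩
  choose η' hη'0 hη'1 hη'z hη'D using hη'ex
  -- an ultrafilter extending atTop
  obtain ⟨U, hU⟩ := Filter.exists_ultrafilter_le (atTop : Filter ℕ)
  have evU : ∀ {p : ℕ → Prop}, (∀ᶠ n in atTop, p n) → ∀ᶠ n in (U : Filter ℕ), p n :=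
    fun h => h.filter_mono hU
  -- the limit function
  have hexη : ∀ x t : G ⧸ Ninf, ∃ c ∈ Set.Icc (0:ℝ) 1,
      Tendsto (fun n => η' n (gQ n x) (gQ n t)) (U : Filter ℕ) (nhds c) :=
    fun x t => ulim_exists U (fun n => ⟨hη'0 n _ _, hη'1 n _ _⟩)
  choose η hη using hexη
  -- support of the transported functions, at level n
  have hsuppn : ∀ n, D n → (Fn n).card = F.card → ∀ y : G ⧸ N n,
      Function.support (η' n y) ⊆ ((W ^ m).image ⇑(πn n) : Finset (G ⧸ N n)) := by
    intro n hDn hc y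
    have h1 := (hη'D n hDn).1 y
    rw [hc, ← hm, ← Finset.coe_pow, hFnW n m] at h1
    exact h1
  -- support property of η
  have hsupp : ∀ x t, t ∉ ((F : Set (G ⧸ Ninf)) ^ m) → η x t = 0 := by
    intro x t ht
    refine tendsto_nhds_unique (hη x t).2 ?_
    have hNeW : ∀ᶠ n in atTop, ∀ w ∈ (W ^ m : Finset G), ((w : G ⧸ N n)) ≠ gQ n t := by
      rw [eventually_all_finset]
      intro w hw
      refine hNe w (σ t) ?_
      rw [hσ]
      intro hcontr
      apply ht
      rw [← Finset.coe_pow]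
      rw [← hcontr]
      exact_mod_cast hWF w hw
    have hev : ∀ᶠ n in (U : Filter ℕ), η' n (gQ n x) (gQ n t) = 0 := by
      filter_upwards [evU hNeW, evU hOne, evU hSym, evU hCard] with n h1 h2 h3 h4
      by_contra h0
      have hmem : gQ n t ∈ ((W ^ m).image ⇑(πn n) : Finset (G ⧸ N n)) :=
        hsuppn n ⟨h2, h3⟩ h4 (gQ n x) h0
      obtain ⟨w, hw, hweq⟩ := Finset.mem_image.1 hmem
      exact h1 w hw hweq
    exact Tendsto.congr' (hev.mono fun n hn => hn.symm) tendsto_const_nhds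
  refine ⟨η, fun x t => (hη x t).1.1, ?_, ?_, ?_⟩
  · -- support
    intro x t ht
    by_contra h
    exact ht (hsupp x t h)
  · -- total mass one
    intro x
    have hsub : Function.support (η x) ⊆ ((F ^ m : Finset (G ⧸ Ninf)) : Set (G ⧸ Ninf)) := by
      intro t ht
      rw [Finset.coe_pow]
      by_contra h
      exact ht (hsupp x t h)
    rw [finsum_eq_sum_of_support_subset _ hsub]
    have htend : Tendsto (fun n => ∑ t ∈ F ^ m, η' n (gQ n x) (gQ n t)) (U : Filter ℕ)
        (nhds (∑ t ∈ F ^ m, η x t)) :=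
      tendsto_finset_sum _ (fun t _ => (hη x t).2)
    have hev : ∀ᶠ n in (U : Filter ℕ),
        (∑ t ∈ F ^ m, η' n (gQ n x) (gQ n t)) = 1 := by
      filter_upwards [evU hInj, evU hOne, evU hSym, evU hCard, evU hCover]
        with n hInj' hOne' hSym' hCard' hCover'
      have hinj : Set.InjOn (gQ n) ↑(F ^ m : Finset (G ⧸ Ninf)) := fun t ht t' ht' hq =>
        hInj' t (hTT' t ht) t' (hTT' t' ht') hq
      rw [← Finset.sum_image (f := fun u => η' n (gQ n x) u)
        (fun t ht t' ht' hq => hinj ht ht' hq)]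
      rw [← finsum_eq_sum_of_support_subset _ (s := (F ^ m).image (gQ n)) ?_]
      · exact (hη'D n ⟨hOne', hSym'⟩).2.1 (gQ n x)
      · intro u hu
        have hmem : u ∈ ((W ^ m).image ⇑(πn n) : Finset (G ⧸ N n)) :=
          hsuppn n ⟨hOne', hSym'⟩ hCard' (gQ n x) hu
        obtain ⟨w, hw, rfl⟩ := Finset.mem_image.1 hmem
        rw [Finset.coe_image]
        exact ⟨(w : G ⧸ Ninf), Finset.mem_coe.2 (hWF w hw), (hCover' w hw).symm⟩
    exact tendsto_nhds_unique htend
      (Tendsto.congr' (hev.mono fun n hn => hn.symm) tendsto_const_nhds)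
  · -- the equivariance estimate
    set csn : ℕ → (G ⧸ Ninf) → ℝ := fun n s =>
      ⨆ y : G ⧸ N n, ∑ᶠ u, |η' n (gQ n s * y) u - η' n y ((gQ n s)⁻¹ * u)| with hcsn
    -- support of the integrand, at level n
    have hRsupp : ∀ n, D n → ∀ s ∈ F, ∀ y : G ⧸ N n,
        Function.support (fun u => |η' n (gQ n s * y) u - η' n y ((gQ n s)⁻¹ * u)|) ⊆
          ((Fn n ^ k (Fn n).card ∪ Fn n * Fn n ^ k (Fn n).card : Finset (G ⧸ N n)) :
            Set (G ⧸ N n)) := by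
      intro n hDn s hs y u hu
      have h2 := (hη'D n hDn).1
      by_cases h0 : η' n (gQ n s * y) u = 0
      · have hb : η' n y ((gQ n s)⁻¹ * u) ≠ 0 := by
          intro hb
          apply hu
          simp only [h0, hb, sub_zero, abs_zero]
        have hmem : (gQ n s)⁻¹ * u ∈ (↑(Fn n) : Set (G ⧸ N n)) ^ k (Fn n).card := h2 y hb
        have : u ∈ (↑(Fn n) : Set (G ⧸ N n)) * (↑(Fn n) : Set (G ⧸ N n)) ^ k (Fn n).card := by
          have := Set.mul_mem_mul (Finset.mem_coe.2 (Finset.mem_image_of_mem (gQ n) hs)) hmem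
          simpa only [mul_inv_cancel_left] using this
        rw [Finset.coe_union, Finset.coe_mul, Finset.coe_pow]
        exact Set.mem_union_right _ this
      · have hmem : u ∈ (↑(Fn n) : Set (G ⧸ N n)) ^ k (Fn n).card :=
          h2 (gQ n s * y) h0
        rw [Finset.coe_union, Finset.coe_pow]
        exact Set.mem_union_left _ hmem
    -- each level-n quantity is bounded by 2
    have hbound : ∀ n, D n → ∀ s ∈ F, ∀ y : G ⧸ N n,
        (∑ᶠ u, |η' n (gQ n s * y) u - η' n y ((gQ n s)⁻¹ * u)|) ≤ 2 := by
      intro n hDn s hs y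
      set j := k (Fn n).card with hj
      set R : Finset (G ⧸ N n) := Fn n ^ j ∪ Fn n * Fn n ^ j with hR
      have hsupppow : ∀ z : G ⧸ N n,
          Function.support (η' n z) ⊆ ((Fn n ^ j : Finset (G ⧸ N n)) : Set (G ⧸ N n)) := by
        intro z
        rw [Finset.coe_pow]
        exact (hη'D n hDn).1 z
      rw [finsum_eq_sum_of_support_subset _ (hRsupp n hDn s hs y)]
      have step1 : ∑ u ∈ R, |η' n (gQ n s * y) u - η' n y ((gQ n s)⁻¹ * u)| ≤
          ∑ u ∈ R, (η' n (gQ n s * y) u + η' n y ((gQ n s)⁻¹ * u)) := by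
        refine Finset.sum_le_sum fun u _ => ?_
        calc |η' n (gQ n s * y) u - η' n y ((gQ n s)⁻¹ * u)|
            ≤ |η' n (gQ n s * y) u| + |η' n y ((gQ n s)⁻¹ * u)| := abs_sub _ _
          _ = η' n (gQ n s * y) u + η' n y ((gQ n s)⁻¹ * u) := by
              rw [abs_of_nonneg (hη'0 n _ _), abs_of_nonneg (hη'0 n _ _)]
      rw [Finset.sum_add_distrib] at step1
      have step2 : ∑ u ∈ R, η' n (gQ n s * y) u ≤ 1 := by
        calc ∑ u ∈ R, η' n (gQ n s * y) u ≤ ∑ᶠ u, η' n (gQ n s * y) u :=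
              sum_le_finsum_of_nonneg R (hη'0 n _) (hsupppow _)
          _ = 1 := (hη'D n hDn).2.1 _
      have step3 : ∑ u ∈ R, η' n y ((gQ n s)⁻¹ * u) ≤ 1 := by
        have hinj : ∀ u ∈ R, ∀ u' ∈ R, (gQ n s)⁻¹ * u = (gQ n s)⁻¹ * u' → u = u' :=
          fun u _ u' _ h => mul_left_cancel h
        calc ∑ u ∈ R, η' n y ((gQ n s)⁻¹ * u)
            = ∑ v ∈ R.image (fun u => (gQ n s)⁻¹ * u), η' n y v :=
              (Finset.sum_image hinj).symm
          _ ≤ ∑ᶠ v, η' n y v := sum_le_finsum_of_nonneg _ (hη'0 n _) (hsupppow _)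
          _ = 1 := (hη'D n hDn).2.1 _
      linarith
    -- bad levels give zero
    have hcs2 : ∀ n, ∀ s ∈ F, csn n s ∈ Set.Icc (0:ℝ) 2 := by
      intro n s hs
      by_cases hDn : D n
      · constructor
        · refine le_ciSup_of_le ⟨2, ?_⟩ (1 : G ⧸ N n) (finsum_nonneg fun u => abs_nonneg _)
          rintro r ⟨y, rfl⟩
          exact hbound n hDn s hs y
        · exact ciSup_le fun y => hbound n hDn s hs y
      · have hz : ∀ y : G ⧸ N n,
            (∑ᶠ u, |η' n (gQ n s * y) u - η' n y ((gQ n s)⁻¹ * u)|) = 0 := by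
          intro y
          have : (fun u : G ⧸ N n => |η' n (gQ n s * y) u - η' n y ((gQ n s)⁻¹ * u)|) =
              fun _ => 0 := by
            funext u
            rw [hη'z n hDn _ _, hη'z n hDn _ _, sub_zero, abs_zero]
          rw [this, finsum_zero]
        have hzero : csn n s = 0 := by
          rw [show csn n s = ⨆ _y : G ⧸ N n, (0:ℝ) from iSup_congr hz, ciSup_const]
        rw [hzero]
        exact ⟨le_refl 0, by norm_num⟩
    -- the limit of each summand
    have hexc : ∀ s : G ⧸ Ninf, ∃ cs : ℝ, s ∈ F →
        (cs ∈ Set.Icc (0:ℝ) 2 ∧ Tendsto (fun n => csn n s) (U : Filter ℕ) (nhds cs)) := by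
      intro s
      by_cases hs : s ∈ F
      · obtain ⟨cs, hcs, ht⟩ := ulim_exists U (fun n => hcs2 n s hs)
        exact ⟨cs, fun _ => ⟨hcs, ht⟩⟩
      · exact ⟨0, fun h => absurd h hs⟩
    choose c hc using hexc
    -- the sums at level n are eventually bounded
    have hsumev : ∀ᶠ n in atTop, (∑ s ∈ F, csn n s) ≤ 1 / (F.card : ℝ) := by
      filter_upwards [hInj, hOne, hSym, hCard] with n hInj' hOne' hSym' hCard'
      have h4 := (hη'D n ⟨hOne', hSym'⟩).2.2
      have hinjF : ∀ t ∈ F, ∀ t' ∈ F, gQ n t = gQ n t' → t = t' :=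
        fun t ht t' ht' h => hInj' t (hFT' t ht) t' (hFT' t' ht') h
      calc ∑ s ∈ F, csn n s
          = ∑ s' ∈ Fn n, ⨆ x, ∑ᶠ u, |η' n (s' * x) u - η' n x (s'⁻¹ * u)| :=
            (Finset.sum_image (f := fun s' => ⨆ x, ∑ᶠ u, |η' n (s' * x) u -
              η' n x (s'⁻¹ * u)|) (g := gQ n) hinjF).symm
        _ ≤ 1 / ((Fn n).card : ℝ) := h4
        _ = 1 / (F.card : ℝ) := by rw [hCard']
    have hcsum : (∑ s ∈ F, c s) ≤ 1 / (F.card : ℝ) := by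
      have ht : Tendsto (fun n => ∑ s ∈ F, csn n s) (U : Filter ℕ)
          (nhds (∑ s ∈ F, c s)) :=
        tendsto_finset_sum _ (fun s hs => (hc s hs).2)
      exact le_of_tendsto ht (evU hsumev)
    refine le_trans (Finset.sum_le_sum ?_) hcsum
    intro s hs
    refine ciSup_le fun x => ?_
    -- rewrite as a finite sum
    have hsub : Function.support (fun t => |η (s * x) t - η x (s⁻¹ * t)|) ⊆
        (T' : Set (G ⧸ Ninf)) := by
      intro t ht
      by_cases h1 : η (s * x) t = 0
      · have h2 : η x (s⁻¹ * t) ≠ 0 := by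
          intro h2
          exact ht (by simp only [h1, h2, sub_zero, abs_zero])
        have hmem : s⁻¹ * t ∈ ((F : Set (G ⧸ Ninf)) ^ m) := by
          by_contra h
          exact h2 (hsupp x _ h)
        have : t ∈ (F : Set (G ⧸ Ninf)) * (F : Set (G ⧸ Ninf)) ^ m := by
          have := Set.mul_mem_mul (Finset.mem_coe.2 hs) hmem
          simpa using this
        rw [hT']
        rw [Finset.coe_union, Finset.coe_union, Finset.coe_mul, Finset.coe_pow]
        exact Set.mem_union_right _ this
      · have hmem : t ∈ ((F : Set (G ⧸ Ninf)) ^ m) := by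
          by_contra h
          exact h1 (hsupp (s * x) t h)
        rw [hT']
        rw [Finset.coe_union, Finset.coe_union, Finset.coe_pow]
        exact Set.mem_union_left _ (Set.mem_union_right _ hmem)
    rw [finsum_eq_sum_of_support_subset _ hsub]
    have htend : Tendsto
        (fun n => ∑ t ∈ T',
          |η' n (gQ n (s * x)) (gQ n t) - η' n (gQ n x) (gQ n (s⁻¹ * t))|)
        (U : Filter ℕ) (nhds (∑ t ∈ T', |η (s * x) t - η x (s⁻¹ * t)|)) :=
      tendsto_finset_sum _ (fun t _ => (((hη (s * x) t).2).sub ((hη x (s⁻¹ * t)).2)).abs)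
    refine le_of_tendsto_of_tendsto htend (hc s hs).2 ?_
    have hmulx : ∀ᶠ n in atTop, gQ n (s * x) = gQ n s * gQ n x := by
      refine (hEq (σ (s * x)) (σ s * σ x) ?_).mono fun n hn => ?_
      · rw [hσ, QuotientGroup.mk_mul, hσ, hσ]
      · rw [show gQ n (s * x) = ((σ (s * x) : G) : G ⧸ N n) from rfl, hn,
          QuotientGroup.mk_mul]
    filter_upwards [evU hInj, evU hOne, evU hSym, evU hMulL, evU hmulx]
      with n hInj' hOne' hSym' hMulL' hmulx'
    have hDn : D n := ⟨hOne', hSym'⟩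
    have hcongr : ∀ t ∈ T',
        |η' n (gQ n (s * x)) (gQ n t) - η' n (gQ n x) (gQ n (s⁻¹ * t))| =
        (fun u => |η' n (gQ n s * gQ n x) u - η' n (gQ n x) ((gQ n s)⁻¹ * u)|) (gQ n t) := by
      intro t ht
      rw [hmulx', hMulL' s hs t ht]
    have hinjT' : ∀ t ∈ T', ∀ t' ∈ T', gQ n t = gQ n t' → t = t' := hInj'
    calc ∑ t ∈ T', |η' n (gQ n (s * x)) (gQ n t) - η' n (gQ n x) (gQ n (s⁻¹ * t))|
        = ∑ t ∈ T', (fun u => |η' n (gQ n s * gQ n x) u -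
            η' n (gQ n x) ((gQ n s)⁻¹ * u)|) (gQ n t) := Finset.sum_congr rfl hcongr
      _ = ∑ u ∈ T'.image (gQ n), (fun u => |η' n (gQ n s * gQ n x) u -
            η' n (gQ n x) ((gQ n s)⁻¹ * u)|) u :=
          (Finset.sum_image (f := fun u => |η' n (gQ n s * gQ n x) u -
            η' n (gQ n x) ((gQ n s)⁻¹ * u)|) (g := gQ n) hinjT').symm
      _ ≤ ∑ᶠ u, |η' n (gQ n s * gQ n x) u - η' n (gQ n x) ((gQ n s)⁻¹ * u)| :=
          sum_le_finsum_of_nonneg _ (fun u => abs_nonneg _) (hRsupp n hDn s hs (gQ n x))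
      _ ≤ csn n s := by
          refine le_ciSup_of_le ⟨2, ?_⟩ (gQ n x) (le_refl _)
          rintro r ⟨y, rfl⟩
          exact hbound n hDn s hs y
end

section
/- Limit groups are uniformly exact with the same modulus of uniform exactness as free groups: if k : ℕ → ℕ is such that every free group has k as a modulus of uniform exactness, then every limit group has k as a modulus of uniform exactness. -/
open scoped Pointwise

open Filter Function

section Helpers

variable {G H : Type*} [Group G] [Group H]

private lemma finsum_shift (f : G → ℝ) (s : G) : ∑ᶠ t, f (s * t) = ∑ᶠ t, f t :=
  finsum_comp_equiv (Equiv.mulLeft s)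

private lemma prob_le_one {f : G → ℝ} {S : Finset G} (h0 : ∀ t, 0 ≤ f t)
    (hs : Function.support f ⊆ (S : Set G)) (h1 : ∑ᶠ t, f t = 1) (t : G) : f t ≤ 1 := by
  by_cases ht : t ∈ S
  · rw [finsum_eq_sum_of_support_subset f hs] at h1
    calc f t ≤ ∑ u ∈ S, f u := Finset.single_le_sum (fun u _ => h0 u) ht
    _ = 1 := h1
  · have hz : f t = 0 := by
      by_contra h
      exact ht (hs (Function.mem_support.2 h))
    rw [hz]; norm_num

private lemma l1diff {f g : G → ℝ} {S : Finset G}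
    (hf0 : ∀ t, 0 ≤ f t) (hg0 : ∀ t, 0 ≤ g t)
    (hfs : Function.support f ⊆ (S : Set G)) (hgs : Function.support g ⊆ (S : Set G))
    (hf1 : ∑ᶠ t, f t = 1) (hg1 : ∑ᶠ t, g t = 1) :
    Function.support (fun t => |f t - g t|) ⊆ (S : Set G) ∧ (∑ᶠ t, |f t - g t|) ≤ 2 := by
  have hsupp : Function.support (fun t => |f t - g t|) ⊆ (S : Set G) := by
    intro t ht
    by_contra hts
    have hft : f t = 0 := by
      by_contra h; exact hts (hfs (Function.mem_support.2 h))
    have hgt : g t = 0 := by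
      by_contra h; exact hts (hgs (Function.mem_support.2 h))
    apply Function.mem_support.1 ht
    simp [hft, hgt]
  refine ⟨hsupp, ?_⟩
  rw [finsum_eq_sum_of_support_subset _ hsupp]
  have h2 : (2:ℝ) = ∑ t ∈ S, f t + ∑ t ∈ S, g t := by
    rw [← finsum_eq_sum_of_support_subset f hfs, ← finsum_eq_sum_of_support_subset g hgs,
      hf1, hg1]
    norm_num
  rw [h2, ← Finset.sum_add_distrib]
  refine Finset.sum_le_sum fun t _ => ?_
  calc |f t - g t| ≤ |f t| + |g t| := abs_sub _ _
  _ = f t + g t := by rw [abs_of_nonneg (hf0 t), abs_of_nonneg (hg0 t)]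

open Classical in
/-- Limit along an ultrafilter of a bounded real sequence. -/
private noncomputable def ulim (U : Ultrafilter ℕ) (f : ℕ → ℝ) : ℝ :=
  if h : ∃ a, Filter.Tendsto f (U : Filter ℕ) (nhds a) then h.choose else 0

private lemma tendsto_ulim {U : Ultrafilter ℕ} {f : ℕ → ℝ} {C : ℝ}
    (hb : ∀ n, f n ∈ Set.Icc (-C) C) :
    Filter.Tendsto f (U : Filter ℕ) (nhds (ulim U f)) := by
  have h : ∃ a, Filter.Tendsto f (U : Filter ℕ) (nhds a) := by
    obtain ⟨a, -, ha⟩ := (isCompact_Icc (a := -C) (b := C)).ultrafilter_le_nhds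
      (Ultrafilter.map f U) (by
        rw [Ultrafilter.coe_map, Filter.le_principal_iff, Filter.mem_map]
        exact Filter.Eventually.of_forall hb)
    exact ⟨a, by rwa [Ultrafilter.coe_map] at ha⟩
  unfold ulim
  rw [dif_pos h]
  exact h.choose_spec

private lemma IsUEModulus.of_mulEquiv {k : ℕ → ℕ} (e : G ≃* H) (hH : IsUEModulus k H) :
    IsUEModulus k G := by
  classical
  intro F hF1 hFsym
  have hcard : (F.image e).card = F.card := Finset.card_image_of_injective F e.injective
  obtain ⟨η, hpos, hsupp, hsum, hineq⟩ := hH (F.image e)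
    (Finset.mem_image.2 ⟨1, hF1, map_one e⟩)
    (by
      intro t ht
      obtain ⟨a, ha, rfl⟩ := Finset.mem_image.1 ht
      exact Finset.mem_image.2 ⟨a⁻¹, hFsym a ha, map_inv e a⟩)
  refine ⟨fun x t => η (e x) (e t), fun x t => hpos _ _, ?_, ?_, ?_⟩
  · intro x t ht
    have h1 : e t ∈ Function.support (η (e x)) := Function.mem_support.2 ht
    have h2 := hsupp (e x) h1
    rw [hcard] at h2
    have h3 : ((F.image e : Finset H) : Set H) ^ k F.card
        = e '' ((F : Set G) ^ k F.card) := by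
      rw [Finset.coe_image, ← Set.image_pow]
    rw [h3] at h2
    obtain ⟨u, hu, hue⟩ := h2
    rwa [← e.injective hue]
  · intro x
    exact (finsum_comp_equiv e.toEquiv (f := fun t => η (e x) t)).trans (hsum (e x))
  · rw [hcard] at hineq
    have hx : ∀ s x : G, (∑ᶠ t : G, |η (e (s * x)) (e t) - η (e x) (e (s⁻¹ * t))|)
        = ∑ᶠ t' : H, |η (e s * e x) t' - η (e x) ((e s)⁻¹ * t')| := by
      intro s x
      have h1 : (fun t : G => |η (e (s * x)) (e t) - η (e x) (e (s⁻¹ * t))|)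
          = fun t : G => |η (e s * e x) (e t) - η (e x) ((e s)⁻¹ * e t)| := by
        funext t; rw [map_mul, map_mul, map_inv]
      rw [h1]
      exact finsum_comp_equiv e.toEquiv
        (f := fun t' => |η (e s * e x) t' - η (e x) ((e s)⁻¹ * t')|)
    calc (∑ s ∈ F, ⨆ x : G, ∑ᶠ t, |η (e (s * x)) (e t) - η (e x) (e (s⁻¹ * t))|)
        = ∑ s ∈ F, ⨆ x : H, ∑ᶠ t, |η (e s * x) t - η x ((e s)⁻¹ * t)| := by
          refine Finset.sum_congr rfl fun s _ => ?_
          rw [show (fun x : G => ∑ᶠ t : G, |η (e (s * x)) (e t) - η (e x) (e (s⁻¹ * t))|)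
              = fun x : G => ∑ᶠ t' : H, |η (e s * e x) t' - η (e x) ((e s)⁻¹ * t')| from
            funext (hx s)]
          exact Equiv.iSup_comp (e := e.toEquiv)
            (g := fun y => ∑ᶠ t', |η (e s * y) t' - η y ((e s)⁻¹ * t')|)
      _ = ∑ s' ∈ F.image e, ⨆ x : H, ∑ᶠ t, |η (s' * x) t - η x (s'⁻¹ * t)| :=
          (Finset.sum_image (f := fun s' => ⨆ x : H, ∑ᶠ t, |η (s' * x) t - η x (s'⁻¹ * t)|)
            (g := ⇑e) (fun a _ b _ h => e.injective h)).symm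
      _ ≤ 1 / (F.card : ℝ) := hineq

end Helpers

set_option maxHeartbeats 1000000 in
/-- Limit groups are uniformly exact with the same modulus of uniform exactness as
free groups: if every free group has `k` as a modulus of uniform exactness, `(N n)` is
a convergent sequence of normal subgroups of `F_d` with limit `N∞` such that every
quotient `F_d ⧸ N n` is a free group, then any group isomorphic to `F_d ⧸ N∞`
(i.e. any limit group) has `k` as a modulus of uniform exactness. -/
theorem limitGroups_isUEModulus
    (k : ℕ → ℕ)
    (hfree : ∀ α : Type, IsUEModulus k (FreeGroup α))
    (d : ℕ)
    (N : ℕ → Subgroup (FreeGroup (Fin d))) [∀ n, (N n).Normal]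
    (Ninf : Subgroup (FreeGroup (Fin d))) [Ninf.Normal]
    (hconv : ∀ w : FreeGroup (Fin d),
      (∀ᶠ n in Filter.atTop, w ∈ N n) ∨ (∀ᶠ n in Filter.atTop, w ∉ N n))
    (hlim : ∀ w : FreeGroup (Fin d), w ∈ Ninf ↔ ∀ᶠ n in Filter.atTop, w ∈ N n)
    (hquotfree : ∀ n, ∃ β : Type,
      Nonempty ((FreeGroup (Fin d) ⧸ N n) ≃* FreeGroup β))
    (L : Type*) [Group L] (hiso : Nonempty (L ≃* (FreeGroup (Fin d) ⧸ Ninf))) :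
    IsUEModulus k L := by
  classical
  obtain ⟨e⟩ := hiso
  refine IsUEModulus.of_mulEquiv e ?_
  have hQ : ∀ n, IsUEModulus k (FreeGroup (Fin d) ⧸ N n) := by
    intro n
    obtain ⟨β, ⟨en⟩⟩ := hquotfree n
    exact IsUEModulus.of_mulEquiv en (hfree β)
  intro F hF1 hFsym
  set r := k F.card with hr
  set M := r + 2 with hMdef
  set π : FreeGroup (Fin d) →* FreeGroup (Fin d) ⧸ Ninf := QuotientGroup.mk' Ninf with hπdef
  set πn : ∀ n, FreeGroup (Fin d) →* FreeGroup (Fin d) ⧸ N n :=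
    fun n => QuotientGroup.mk' (N n) with hπndef
  have hπeq : ∀ u v : FreeGroup (Fin d), π u = π v ↔ u⁻¹ * v ∈ Ninf := by
    intro u v
    rw [hπdef]
    simp only [QuotientGroup.mk'_apply]
    exact QuotientGroup.eq
  have hπneq : ∀ n, ∀ u v : FreeGroup (Fin d), πn n u = πn n v ↔ u⁻¹ * v ∈ N n := by
    intro n u v
    rw [hπndef]
    simp only [QuotientGroup.mk'_apply]
    exact QuotientGroup.eq
  have hπout : ∀ q : FreeGroup (Fin d) ⧸ Ninf, π (Quotient.out q) = q := by
    intro q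
    rw [hπdef]
    simp only [QuotientGroup.mk'_apply]
    exact QuotientGroup.out_eq' q
  -- a section of π adapted to F
  obtain ⟨σ, hσ1, hπσ⟩ :
      ∃ σ : (FreeGroup (Fin d) ⧸ Ninf) → FreeGroup (Fin d),
        σ 1 = 1 ∧ ∀ q, π (σ q) = q := by
    refine ⟨fun q => if q = 1 then 1 else Quotient.out q, by simp, ?_⟩
    intro q
    by_cases h : q = 1
    · subst h; simp
    · simp only [if_neg h]
      exact hπout q
  set Ft : Finset (FreeGroup (Fin d)) := F.image σ with hFtdef
  have h1Ft : (1 : FreeGroup (Fin d)) ∈ Ft := by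
    rw [hFtdef]
    exact Finset.mem_image.2 ⟨1, hF1, hσ1⟩
  have hFtπ : Ft.image π = F := by
    rw [hFtdef, Finset.image_image]
    have : F.image (⇑π ∘ σ) = F.image id := Finset.image_congr (fun f _ => hπσ f)
    rw [this, Finset.image_id]
  set E : Finset (FreeGroup (Fin d)) := Ft ∪ Ft⁻¹ with hEdef
  have h1E : (1 : FreeGroup (Fin d)) ∈ E := Finset.mem_union_left _ h1Ft
  set G0 : Finset (FreeGroup (Fin d)) := E ^ (M + 1) with hG0def
  have hFtG0 : ∀ j ≤ M + 1, ∀ u ∈ Ft ^ j, u ∈ G0 := by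
    intro j hj u hu
    exact Finset.pow_subset_pow Finset.subset_union_left h1E hj hu
  have hFt1G0 : ∀ u ∈ Ft, u ∈ G0 := by
    intro u hu
    exact hFtG0 1 (by omega) u (by rwa [pow_one])
  have hmulFt : ∀ u ∈ Ft, ∀ j ≤ M, ∀ v ∈ Ft ^ j, u * v ∈ G0 := by
    intro u hu j hj v hv
    refine Finset.pow_subset_pow Finset.subset_union_left h1E
      (show j + 1 ≤ M + 1 by omega) ?_
    rw [pow_succ']
    exact Finset.mul_mem_mul hu hv
  have hmulInvFt : ∀ u ∈ Ft, ∀ j ≤ M, ∀ v ∈ Ft ^ j, u⁻¹ * v ∈ G0 := by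
    intro u hu j hj v hv
    have h1 : u⁻¹ ∈ E := Finset.mem_union_right _ (Finset.inv_mem_inv hu)
    have h2 : v ∈ E ^ j := Finset.pow_subset_pow_left Finset.subset_union_left hv
    refine Finset.pow_subset_pow_right h1E (show j + 1 ≤ M + 1 by omega) ?_
    rw [pow_succ']
    exact Finset.mul_mem_mul h1 h2
  -- a partial lift of π⁻¹ on the ball of radius M
  obtain ⟨ℓ, hℓ⟩ :
      ∃ ℓ : (FreeGroup (Fin d) ⧸ Ninf) → FreeGroup (Fin d),
        ∀ q ∈ (Ft ^ M).image π, ℓ q ∈ Ft ^ M ∧ π (ℓ q) = q := by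
    refine ⟨fun q => if h : ∃ u, u ∈ Ft ^ M ∧ π u = q then h.choose else 1, ?_⟩
    intro q hq
    obtain ⟨u, hu, hup⟩ := Finset.mem_image.1 hq
    have h : ∃ u, u ∈ Ft ^ M ∧ π u = q := ⟨u, hu, hup⟩
    simp only [dif_pos h]
    exact h.choose_spec
  -- the window of agreement
  set W : Finset (FreeGroup (Fin d)) := G0⁻¹ * G0 with hWdef
  set Good : ℕ → Prop := fun n => ∀ w ∈ W, (w ∈ N n ↔ w ∈ Ninf) with hGooddef
  have hGood : ∀ᶠ n in Filter.atTop, Good n := by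
    rw [hGooddef]
    rw [Filter.eventually_all_finset]
    intro w _
    by_cases hwN : w ∈ Ninf
    · filter_upwards [(hlim w).1 hwN] with n h
      exact ⟨fun _ => hwN, fun _ => h⟩
    · have h2 : ∀ᶠ n in Filter.atTop, w ∉ N n :=
        (hconv w).resolve_left (fun h => hwN ((hlim w).2 h))
      filter_upwards [h2] with n h
      exact ⟨fun hn => absurd hn h, fun h' => absurd h' hwN⟩
  set U : Ultrafilter ℕ := Ultrafilter.of Filter.atTop with hUdef
  have hU : ∀ {p : ℕ → Prop}, (∀ᶠ n in Filter.atTop, p n) →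
      ∀ᶠ n in (U : Filter ℕ), p n := by
    intro p hp
    exact Ultrafilter.of_le Filter.atTop hp
  have hGoodU : ∀ᶠ n in (U : Filter ℕ), Good n := hU hGood
  -- key transfer principle
  have hkeyGG : ∀ n, Good n → ∀ u v : FreeGroup (Fin d), u ∈ G0 → v ∈ G0 →
      (πn n u = πn n v ↔ π u = π v) := by
    intro n hn u v hu hv
    have hw : u⁻¹ * v ∈ W := by
      rw [hWdef]
      exact Finset.mul_mem_mul (Finset.inv_mem_inv hu) hv
    rw [hπneq, hπeq]
    exact hn _ hw
  -- basic facts about F and its lift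
  have hFj : ∀ j : ℕ, F ^ j = (Ft ^ j).image π := by
    intro j
    rw [Finset.image_pow, hFtπ]
  have hFsubIm : ∀ j ≤ M, ∀ t ∈ F ^ j, t ∈ (Ft ^ M).image π := by
    intro j hj t ht
    rw [hFj j] at ht
    obtain ⟨u, hu, rfl⟩ := Finset.mem_image.1 ht
    exact Finset.mem_image_of_mem _ (Finset.pow_subset_pow_right h1Ft hj hu)
  have hπFtinj : ∀ u ∈ Ft, ∀ v ∈ Ft, π u = π v → u = v := by
    intro u hu v hv h
    obtain ⟨f, _, rfl⟩ := Finset.mem_image.1 hu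
    obtain ⟨g, _, rfl⟩ := Finset.mem_image.1 hv
    rw [hπσ, hπσ] at h
    rw [h]
  -- quotient data
  set Fn : ∀ n, Finset (FreeGroup (Fin d) ⧸ N n) := fun n => Ft.image (πn n) with hFndef
  have h1Fn : ∀ n, (1 : FreeGroup (Fin d) ⧸ N n) ∈ Fn n := by
    intro n
    rw [hFndef]
    exact Finset.mem_image.2 ⟨1, h1Ft, map_one _⟩
  have hsFn : ∀ n, ∀ s ∈ F, πn n (σ s) ∈ Fn n := by
    intro n s hs
    rw [hFndef]
    exact Finset.mem_image_of_mem _ (Finset.mem_image_of_mem σ hs)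
  have hcard : ∀ n, Good n → (Fn n).card = F.card := by
    intro n hn
    have h1 : (Fn n).card = Ft.card := by
      rw [hFndef]
      refine Finset.card_image_of_injOn ?_
      intro u hu v hv h
      exact hπFtinj u hu v hv
        ((hkeyGG n hn u v (hFt1G0 u hu) (hFt1G0 v hv)).1 h)
    have h2 : Ft.card = F.card := by
      rw [hFtdef]
      refine Finset.card_image_of_injOn ?_
      intro f _ g _ h
      rw [← hπσ f, ← hπσ g, h]
    rw [h1, h2]
  have hsymFn : ∀ n, Good n → ∀ t ∈ Fn n, t⁻¹ ∈ Fn n := by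
    intro n hn t ht
    rw [hFndef] at ht
    obtain ⟨u, hu, rfl⟩ := Finset.mem_image.1 ht
    obtain ⟨f, hf, rfl⟩ := Finset.mem_image.1 hu
    have hf' : f⁻¹ ∈ F := hFsym f hf
    have hππ : π (σ f * σ f⁻¹) = π 1 := by
      rw [map_mul, hπσ, hπσ, map_one, mul_inv_cancel]
    have hG : σ f * σ f⁻¹ ∈ G0 := by
      refine hmulFt (σ f) (Finset.mem_image_of_mem σ hf) 1 (by omega) (σ f⁻¹) ?_
      rw [pow_one]
      exact Finset.mem_image_of_mem σ hf'
    have h1G : (1 : FreeGroup (Fin d)) ∈ G0 := Finset.one_mem_pow h1E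
    have hkey := (hkeyGG n hn _ 1 hG h1G).2 hππ
    rw [map_mul, map_one] at hkey
    have hinv : (πn n (σ f))⁻¹ = πn n (σ f⁻¹) := inv_eq_of_mul_eq_one_right hkey
    rw [hinv]
    exact Finset.mem_image_of_mem _ (Finset.mem_image_of_mem σ hf')
  -- compatibility of the lift with the quotient maps, on the window
  have hπnℓ : ∀ n, Good n → ∀ j ≤ M, ∀ u ∈ Ft ^ j, πn n (ℓ (π u)) = πn n u := by
    intro n hn j hj u hu
    have h1 := hℓ (π u) (Finset.mem_image_of_mem _ (Finset.pow_subset_pow_right h1Ft hj hu))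
    exact (hkeyGG n hn _ u (hFtG0 M (by omega) _ h1.1) (hFtG0 j (by omega) u hu)).2 h1.2
  have hinj : ∀ n, Good n → ∀ j ≤ M, ∀ t1 ∈ F ^ j, ∀ t2 ∈ F ^ j,
      πn n (ℓ t1) = πn n (ℓ t2) → t1 = t2 := by
    intro n hn j hj t1 h1 t2 h2 heq
    have l1 := hℓ t1 (hFsubIm j hj t1 h1)
    have l2 := hℓ t2 (hFsubIm j hj t2 h2)
    have h3 := (hkeyGG n hn _ _ (hFtG0 M (by omega) _ l1.1) (hFtG0 M (by omega) _ l2.1)).1 heq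
    rw [l1.2, l2.2] at h3
    exact h3
  have himg : ∀ n, Good n → ∀ j ≤ M,
      (F ^ j).image (fun t => πn n (ℓ t)) = (Ft ^ j).image (πn n) := by
    intro n hn j hj
    rw [hFj j, Finset.image_image]
    exact Finset.image_congr (fun u hu => hπnℓ n hn j hj u (Finset.mem_coe.1 hu))
  -- choose uniform exactness data in each quotient
  obtain ⟨η, hη0, hηsupp, hη1, hηineq⟩ :
      ∃ η : ∀ n, (FreeGroup (Fin d) ⧸ N n) → (FreeGroup (Fin d) ⧸ N n) → ℝ,
        (∀ n y t, 0 ≤ η n y t) ∧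
        (∀ n y, Function.support (η n y) ⊆ ((Fn n : Set _)) ^ k (Fn n).card) ∧
        (∀ n y, ∑ᶠ t, η n y t = 1) ∧
        (∀ n, (∀ t ∈ Fn n, t⁻¹ ∈ Fn n) →
          (∑ s' ∈ Fn n, ⨆ y, ∑ᶠ t, |η n (s' * y) t - η n y (s'⁻¹ * t)|)
            ≤ 1 / ((Fn n).card : ℝ)) := by
    choose η' hη' using fun n (h : ∀ t ∈ Fn n, t⁻¹ ∈ Fn n) => hQ n (Fn n) (h1Fn n) h
    refine ⟨fun n => if h : (∀ t ∈ Fn n, t⁻¹ ∈ Fn n) then η' n h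
      else fun _ t => if t = 1 then 1 else 0, ?_, ?_, ?_, ?_⟩
    · intro n y t
      by_cases h : (∀ t ∈ Fn n, t⁻¹ ∈ Fn n)
      · simp only [dif_pos h]; exact (hη' n h).1 y t
      · simp only [dif_neg h]
        split <;> norm_num
    · intro n y
      by_cases h : (∀ t ∈ Fn n, t⁻¹ ∈ Fn n)
      · simp only [dif_pos h]; exact (hη' n h).2.1 y
      · simp only [dif_neg h]
        intro t ht
        have ht1 : t = 1 := by
          by_contra hc
          exact Function.mem_support.1 ht (by simp [hc])
        rw [ht1]
        exact Set.one_mem_pow (Finset.mem_coe.2 (h1Fn n))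
    · intro n y
      by_cases h : (∀ t ∈ Fn n, t⁻¹ ∈ Fn n)
      · simp only [dif_pos h]; exact (hη' n h).2.2.1 y
      · simp only [dif_neg h]
        have hsub : Function.support (fun t : FreeGroup (Fin d) ⧸ N n =>
            if t = 1 then (1:ℝ) else 0) ⊆ (({1} : Finset (FreeGroup (Fin d) ⧸ N n)) : Set _) := by
          intro t ht
          by_contra hc
          have : t ≠ 1 := by simpa using hc
          exact Function.mem_support.1 ht (by simp [this])
        rw [finsum_eq_sum_of_support_subset _ hsub]
        simp
    · intro n h
      simp only [dif_pos h]
      exact (hη' n h).2.2.2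
  -- support facts for η in good quotients
  have hsuppFin : ∀ n, Good n → ∀ y,
      Function.support (η n y) ⊆ (((Ft ^ r).image (πn n) : Finset _) : Set _) := by
    intro n hn y t ht
    have h1 := hηsupp n y ht
    rw [hcard n hn] at h1
    rw [← Finset.coe_pow] at h1
    have h2 : Fn n ^ r = (Ft ^ r).image (πn n) := by
      rw [hFndef, ← Finset.image_pow]
    rwa [← h2]
  have hsupp0 : ∀ n, Good n → ∀ (z : FreeGroup (Fin d) ⧸ N n) (u : FreeGroup (Fin d)),
      u ∈ G0 → π u ∉ F ^ r → η n z (πn n u) = 0 := by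
    intro n hn z u hu hnot
    by_contra h
    have hmem := hsuppFin n hn z (Function.mem_support.2 h)
    rw [Finset.mem_coe] at hmem
    obtain ⟨v, hv, hveq⟩ := Finset.mem_image.1 hmem
    have hpi : π v = π u := (hkeyGG n hn v u (hFtG0 r (by omega) v hv) hu).1 hveq
    apply hnot
    rw [← hpi, hFj r]
    exact Finset.mem_image_of_mem _ hv
  -- the approximating kernels and their ultralimit
  set θ : ℕ → (FreeGroup (Fin d) ⧸ Ninf) → (FreeGroup (Fin d) ⧸ Ninf) → ℝ :=
    fun n x t => if t ∈ F ^ r then η n (πn n (Quotient.out x)) (πn n (ℓ t)) else 0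
    with hθdef
  have hθmem : ∀ n x t, θ n x t ∈ Set.Icc (0:ℝ) 1 := by
    intro n x t
    rw [hθdef]
    dsimp only
    split
    · refine ⟨hη0 n _ _, ?_⟩
      refine prob_le_one (S := Fn n ^ k (Fn n).card) (hη0 n _) ?_ (hη1 n _) _
      rw [Finset.coe_pow]
      exact hηsupp n _
    · norm_num
  set ζ : (FreeGroup (Fin d) ⧸ Ninf) → (FreeGroup (Fin d) ⧸ Ninf) → ℝ :=
    fun x t => ulim U (fun n => θ n x t) with hζdef
  have hζten : ∀ x t, Filter.Tendsto (fun n => θ n x t) (U : Filter ℕ) (nhds (ζ x t)) := by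
    intro x t
    rw [hζdef]
    exact tendsto_ulim (C := 1)
      (fun n => ⟨by linarith [(hθmem n x t).1], (hθmem n x t).2⟩)
  have hζ0 : ∀ x t, t ∉ F ^ r → ζ x t = 0 := by
    intro x t ht
    have h := hζten x t
    have h2 : (fun n => θ n x t) = fun _ => (0:ℝ) := by
      funext n
      rw [hθdef]
      exact if_neg ht
    rw [h2] at h
    exact tendsto_nhds_unique h tendsto_const_nhds
  have hζnn : ∀ x t, 0 ≤ ζ x t := fun x t =>
    ge_of_tendsto (hζten x t) (Filter.Eventually.of_forall fun n => (hθmem n x t).1)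
  have hζsupp : ∀ x, Function.support (ζ x) ⊆ ((F ^ r : Finset _) : Set _) := by
    intro x t ht
    rw [Finset.mem_coe]
    by_contra hc
    exact Function.mem_support.1 ht (hζ0 x t hc)
  -- the equivariance event
  have hxs : ∀ (s : FreeGroup (Fin d) ⧸ Ninf) (x : FreeGroup (Fin d) ⧸ Ninf),
      ∀ᶠ n in (U : Filter ℕ),
        πn n (Quotient.out (s * x)) = πn n (σ s) * πn n (Quotient.out x) := by
    intro s x
    have hmem : (Quotient.out (s * x))⁻¹ * (σ s * Quotient.out x) ∈ Ninf := by
      rw [← hπeq]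
      rw [map_mul, hπσ, hπout, hπout]
    filter_upwards [hU ((hlim _).1 hmem)] with n hn
    have h1 : πn n (Quotient.out (s * x)) = πn n (σ s * Quotient.out x) :=
      (hπneq n _ _).2 hn
    rwa [map_mul] at h1
  -- uniform bound on the ℓ¹ differences
  have hdiffsupp : ∀ n, ∀ s ∈ F, ∀ y0,
      Function.support (fun t' => |η n (πn n (σ s) * y0) t' - η n y0 ((πn n (σ s))⁻¹ * t')|)
        ⊆ ((Fn n ^ (k (Fn n).card + 1) : Finset _) : Set _) ∧
      (∑ᶠ t', |η n (πn n (σ s) * y0) t' - η n y0 ((πn n (σ s))⁻¹ * t')|) ≤ 2 := by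
    intro n s hs y0
    refine l1diff (hη0 n _) (fun t => hη0 n y0 _) ?_ ?_ (hη1 n _) ?_
    · intro t ht
      have h1 := hηsupp n _ ht
      rw [← Finset.coe_pow] at h1
      exact Finset.coe_subset.2
        (Finset.pow_subset_pow_right (h1Fn n) (by omega)) h1
    · intro t ht
      have h1 : (πn n (σ s))⁻¹ * t ∈ Function.support (η n y0) :=
        Function.mem_support.2 (by simpa using Function.mem_support.1 ht)
      have h2 := hηsupp n y0 h1
      rw [← Finset.coe_pow] at h2
      rw [Finset.mem_coe] at h2 ⊢
      have h3 : t = πn n (σ s) * ((πn n (σ s))⁻¹ * t) := by group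
      rw [h3, pow_succ']
      exact Finset.mul_mem_mul (hsFn n s hs) h2
    · have := finsum_shift (η n y0) ((πn n (σ s))⁻¹)
      rw [this]
      exact hη1 n y0
  -- the supremal displacement quantities and their ultralimits
  set A : ℕ → (FreeGroup (Fin d) ⧸ Ninf) → ℝ := fun n s =>
    ⨆ y : FreeGroup (Fin d) ⧸ N n,
      ∑ᶠ t, |η n (πn n (σ s) * y) t - η n y ((πn n (σ s))⁻¹ * t)| with hAdef
  have hAbdd : ∀ n, ∀ s ∈ F, BddAbove (Set.range fun y : FreeGroup (Fin d) ⧸ N n =>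
      ∑ᶠ t, |η n (πn n (σ s) * y) t - η n y ((πn n (σ s))⁻¹ * t)|) := by
    intro n s hs
    refine ⟨2, ?_⟩
    rintro _ ⟨y0, rfl⟩
    exact (hdiffsupp n s hs y0).2
  have hAmem : ∀ n, ∀ s ∈ F, A n s ∈ Set.Icc (-2 : ℝ) 2 := by
    intro n s hs
    constructor
    · have h0 : (0:ℝ) ≤ A n s := by
        rw [hAdef]
        refine le_trans (finsum_nonneg fun t' => abs_nonneg _)
          (le_ciSup (hAbdd n s hs) (1 : FreeGroup (Fin d) ⧸ N n))
      linarith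
    · rw [hAdef]
      exact ciSup_le fun y0 => (hdiffsupp n s hs y0).2
  set a : (FreeGroup (Fin d) ⧸ Ninf) → ℝ := fun s => ulim U (fun n => A n s) with hadef
  have haten : ∀ s ∈ F, Filter.Tendsto (fun n => A n s) (U : Filter ℕ) (nhds (a s)) := by
    intro s hs
    rw [hadef]
    exact tendsto_ulim (C := 2) (fun n => hAmem n s hs)
  -- the core comparison estimate for good levels
  have hcore : ∀ n, Good n → ∀ s ∈ F, ∀ x,
      πn n (Quotient.out (s * x)) = πn n (σ s) * πn n (Quotient.out x) →
      (∑ t ∈ F ^ (r + 1), |θ n (s * x) t - θ n x (s⁻¹ * t)|) ≤ A n s := by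
    intro n hn s hs x hsx
    have hσsFt : σ s ∈ Ft := by
      rw [hFtdef]
      exact Finset.mem_image_of_mem σ hs
    have hterm : ∀ t ∈ F ^ (r + 1),
        θ n (s * x) t = η n (πn n (σ s) * πn n (Quotient.out x)) (πn n (ℓ t)) ∧
        θ n x (s⁻¹ * t) = η n (πn n (Quotient.out x)) ((πn n (σ s))⁻¹ * πn n (ℓ t)) := by
      intro t ht
      have hℓt := hℓ t (hFsubIm (r + 1) (by omega) t ht)
      constructor
      · rw [hθdef]
        dsimp only
        by_cases hF : t ∈ F ^ r
        · rw [if_pos hF, hsx]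
        · rw [if_neg hF]
          exact (hsupp0 n hn _ (ℓ t) (hFtG0 M (by omega) _ hℓt.1)
            (by rw [hℓt.2]; exact hF)).symm
      · rw [hθdef]
        dsimp only
        by_cases hF : s⁻¹ * t ∈ F ^ r
        · rw [if_pos hF]
          congr 1
          have hℓst := hℓ (s⁻¹ * t) (hFsubIm r (by omega) _ hF)
          have hkey := (hkeyGG n hn (σ s * ℓ (s⁻¹ * t)) (ℓ t)
            (hmulFt (σ s) hσsFt M (le_refl M) _ hℓst.1) (hFtG0 M (by omega) _ hℓt.1)).2
            (by rw [map_mul, hπσ, hℓst.2, hℓt.2, mul_inv_cancel_left])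
          rw [map_mul] at hkey
          rw [← hkey, inv_mul_cancel_left]
        · rw [if_neg hF]
          have harg : (πn n (σ s))⁻¹ * πn n (ℓ t) = πn n ((σ s)⁻¹ * ℓ t) := by
            rw [map_mul, map_inv]
          rw [harg]
          refine (hsupp0 n hn _ ((σ s)⁻¹ * ℓ t)
            (hmulInvFt (σ s) hσsFt M (le_refl M) _ hℓt.1) ?_).symm
          rw [map_mul, map_inv, hπσ, hℓt.2]
          exact hF
    have hsuppdiff := hdiffsupp n s hs (πn n (Quotient.out x))
    calc (∑ t ∈ F ^ (r + 1), |θ n (s * x) t - θ n x (s⁻¹ * t)|)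
        = ∑ t ∈ F ^ (r + 1),
            |η n (πn n (σ s) * πn n (Quotient.out x)) (πn n (ℓ t))
              - η n (πn n (Quotient.out x)) ((πn n (σ s))⁻¹ * πn n (ℓ t))| :=
          Finset.sum_congr rfl fun t ht => by rw [(hterm t ht).1, (hterm t ht).2]
      _ = ∑ t' ∈ (F ^ (r + 1)).image (fun t => πn n (ℓ t)),
            |η n (πn n (σ s) * πn n (Quotient.out x)) t'
              - η n (πn n (Quotient.out x)) ((πn n (σ s))⁻¹ * t')| :=
          (Finset.sum_image
            (f := fun t' => |η n (πn n (σ s) * πn n (Quotient.out x)) t'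
              - η n (πn n (Quotient.out x)) ((πn n (σ s))⁻¹ * t')|)
            (g := fun t => πn n (ℓ t))
            (fun t1 h1 t2 h2 he =>
              hinj n hn (r + 1) (by omega) t1 h1 t2 h2 he)).symm
      _ = ∑ᶠ t', |η n (πn n (σ s) * πn n (Quotient.out x)) t'
              - η n (πn n (Quotient.out x)) ((πn n (σ s))⁻¹ * t')| := by
          rw [himg n hn (r + 1) (by omega)]
          refine (finsum_eq_sum_of_support_subset _ ?_).symm
          intro t' ht'
          have h1 : t' ∈ Fn n ^ (k (Fn n).card + 1) := Finset.mem_coe.1 (hsuppdiff.1 ht')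
          rw [hcard n hn] at h1
          rw [Finset.mem_coe]
          have h2 : (Ft ^ (r + 1)).image (πn n) = Fn n ^ (r + 1) := by
            rw [hFndef, Finset.image_pow]
          rw [h2]
          exact h1
      _ ≤ A n s := by
          rw [hAdef]
          exact le_ciSup (hAbdd n s hs) (πn n (Quotient.out x))
  -- total mass one
  have hsum1 : ∀ x, ∑ᶠ t, ζ x t = 1 := by
    intro x
    rw [finsum_eq_sum_of_support_subset _ (hζsupp x)]
    have hten : Filter.Tendsto (fun n => ∑ t ∈ F ^ r, θ n x t) (U : Filter ℕ)
        (nhds (∑ t ∈ F ^ r, ζ x t)) :=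
      tendsto_finset_sum _ (fun t _ => hζten x t)
    have hev : ∀ᶠ n in (U : Filter ℕ), (∑ t ∈ F ^ r, θ n x t) = 1 := by
      filter_upwards [hGoodU] with n hn
      have h1 : ∀ t ∈ F ^ r, θ n x t = η n (πn n (Quotient.out x)) (πn n (ℓ t)) := by
        intro t ht
        rw [hθdef]
        dsimp only
        rw [if_pos ht]
      rw [Finset.sum_congr rfl h1]
      rw [← Finset.sum_image (f := fun t' => η n (πn n (Quotient.out x)) t')
        (g := fun t => πn n (ℓ t))
        (fun t1 h1 t2 h2 he => hinj n hn r (by omega) t1 h1 t2 h2 he)]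
      rw [himg n hn r (by omega)]
      rw [← finsum_eq_sum_of_support_subset _ (hsuppFin n hn (πn n (Quotient.out x)))]
      exact hη1 n _
    have hten1 : Filter.Tendsto (fun _ : ℕ => (1:ℝ)) (U : Filter ℕ)
        (nhds (∑ t ∈ F ^ r, ζ x t)) := by
      refine Filter.Tendsto.congr' ?_ hten
      exact hev
    exact tendsto_nhds_unique hten1 tendsto_const_nhds
  -- the displacement estimate
  have hDa : ∀ s ∈ F, ∀ x, (∑ᶠ t, |ζ (s * x) t - ζ x (s⁻¹ * t)|) ≤ a s := by
    intro s hs x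
    have hFr1 : (F ^ r : Finset _) ⊆ F ^ (r + 1) :=
      Finset.pow_subset_pow_right hF1 (by omega)
    have hsupp : Function.support (fun t => |ζ (s * x) t - ζ x (s⁻¹ * t)|)
        ⊆ ((F ^ (r + 1) : Finset _) : Set _) := by
      intro t ht
      rw [Finset.mem_coe]
      by_contra hc
      have h1 : ζ (s * x) t = 0 := hζ0 _ _ (fun h => hc (hFr1 h))
      have h2 : ζ x (s⁻¹ * t) = 0 := by
        refine hζ0 _ _ (fun h => hc ?_)
        have h3 : t = s * (s⁻¹ * t) := by group
        rw [h3, pow_succ']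
        exact Finset.mul_mem_mul hs h
      exact Function.mem_support.1 ht (by rw [h1, h2]; simp)
    rw [finsum_eq_sum_of_support_subset _ hsupp]
    have hten : Filter.Tendsto
        (fun n => ∑ t ∈ F ^ (r + 1), |θ n (s * x) t - θ n x (s⁻¹ * t)|) (U : Filter ℕ)
        (nhds (∑ t ∈ F ^ (r + 1), |ζ (s * x) t - ζ x (s⁻¹ * t)|)) :=
      tendsto_finset_sum _ fun t _ => ((hζten (s * x) t).sub (hζten x (s⁻¹ * t))).abs
    refine le_of_tendsto_of_tendsto hten (haten s hs) ?_
    filter_upwards [hGoodU, hxs s x] with n hn hsxn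
    exact hcore n hn s hs x hsxn
  -- assemble the witness
  refine ⟨ζ, hζnn, ?_, hsum1, ?_⟩
  · intro x
    rw [← Finset.coe_pow]
    exact hζsupp x
  · calc (∑ s ∈ F, ⨆ x, ∑ᶠ t, |ζ (s * x) t - ζ x (s⁻¹ * t)|)
        ≤ ∑ s ∈ F, a s :=
          Finset.sum_le_sum fun s hs => ciSup_le fun x => hDa s hs x
      _ ≤ 1 / (F.card : ℝ) := by
          have hten : Filter.Tendsto (fun n => ∑ s ∈ F, A n s) (U : Filter ℕ)
              (nhds (∑ s ∈ F, a s)) :=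
            tendsto_finset_sum _ fun s hs => haten s hs
          refine le_of_tendsto hten ?_
          filter_upwards [hGoodU] with n hn
          have hFn2 : Fn n = F.image (fun f => πn n (σ f)) := by
            simp only [hFndef, hFtdef, Finset.image_image]
            rfl
          have hinj2 : ∀ f ∈ F, ∀ g ∈ F, πn n (σ f) = πn n (σ g) → f = g := by
            intro f hf g hg h
            have h2 := (hkeyGG n hn (σ f) (σ g)
              (hFt1G0 _ (Finset.mem_image_of_mem σ hf))
              (hFt1G0 _ (Finset.mem_image_of_mem σ hg))).1 h
            rw [hπσ, hπσ] at h2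
            exact h2
          have heq : (∑ s ∈ F, A n s) = ∑ s' ∈ Fn n,
              ⨆ y, ∑ᶠ t, |η n (s' * y) t - η n y (s'⁻¹ * t)| := by
            rw [hFn2]
            exact (Finset.sum_image
              (f := fun s' => ⨆ y, ∑ᶠ t, |η n (s' * y) t - η n y (s'⁻¹ * t)|)
              (g := fun f => πn n (σ f)) hinj2).symm
          rw [heq]
          calc (∑ s' ∈ Fn n, ⨆ y, ∑ᶠ t, |η n (s' * y) t - η n y (s'⁻¹ * t)|)
              ≤ 1 / ((Fn n).card : ℝ) := hηineq n (hsymFn n hn)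
            _ = 1 / (F.card : ℝ) := by rw [hcard n hn]
end

section
/- For every k : ℕ → ℕ, the class UE(k) is closed under taking subgroups: if a group Γ has k as a modulus of uniform exactness and Δ is a subgroup of Γ, then Δ has k as a modulus of uniform exactness. -/
open scoped Pointwise

/-- The class `UE(k)` is closed under taking subgroups. -/
theorem isUEModulus_subgroup (k : ℕ → ℕ) (Γ : Type*) [Group Γ]
    (h : IsUEModulus k Γ) (Δ : Subgroup Γ) : IsUEModulus k Δ := by
  classical
  intro F h1 hinv
  set F' : Finset Γ := F.image Subtype.val with hF'def
  have hcard : F'.card = F.card := Finset.card_image_of_injective _ Subtype.val_injective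
  have h1' : (1 : Γ) ∈ F' := Finset.mem_image.2 ⟨1, h1, rfl⟩
  have hinv' : ∀ t ∈ F', t⁻¹ ∈ F' := by
    intro t ht
    obtain ⟨u, hu, rfl⟩ := Finset.mem_image.1 ht
    exact Finset.mem_image.2 ⟨u⁻¹, hinv u hu, rfl⟩
  obtain ⟨η, hpos, hsupp, hsum, hbound⟩ := h F' h1' hinv'
  -- finiteness of powers of F'
  have hfin : ∀ n : ℕ, ((F' : Set Γ) ^ n).Finite := by
    intro n
    induction n with
    | zero => simp only [pow_zero]; exact Set.finite_one
    | succ n ih => rw [pow_succ]; exact ih.mul F'.finite_toSet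
  have hsuppfin : ∀ x : Γ, (Function.support (η x)).Finite :=
    fun x => (hfin _).subset (hsupp x)
  -- powers of F' lie in Δ
  have hFsub : (F' : Set Γ) ⊆ (Δ : Set Γ) := by
    intro t ht
    obtain ⟨u, _, rfl⟩ := Finset.mem_image.1 (Finset.mem_coe.1 ht)
    exact u.2
  have hDsub : ∀ n, ((F' : Set Γ) ^ n) ⊆ (Δ : Set Γ) := by
    intro n
    induction n with
    | zero =>
      simp only [pow_zero, Set.one_subset, SetLike.mem_coe]
      exact Δ.one_mem
    | succ n ih =>
      rw [pow_succ]
      rintro _ ⟨a, ha, b, hb, rfl⟩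
      exact Δ.mul_mem (ih ha) (hFsub hb)
  have hsuppD : ∀ x : Γ, Function.support (η x) ⊆ (Δ : Set Γ) :=
    fun x => (hsupp x).trans (hDsub _)
  have hrange : Set.range (Subtype.val : Δ → Γ) = (Δ : Set Γ) := Subtype.range_val
  -- transfer of finsums between Δ and Γ
  have key : ∀ g : Γ → ℝ, Function.support g ⊆ (Δ : Set Γ) →
      (∑ᶠ t : Δ, g ↑t) = ∑ᶠ t, g t := by
    intro g hg
    rw [← finsum_mem_range Subtype.val_injective, hrange, ← finsum_mem_univ g]
    refine finsum_mem_inter_support_eq g _ _ ?_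
    ext x
    constructor
    · rintro ⟨_, hx2⟩; exact ⟨trivial, hx2⟩
    · rintro ⟨_, hx2⟩; exact ⟨hg hx2, hx2⟩
  -- the candidate map on Δ
  refine ⟨fun x t => η ↑x ↑t, fun x t => hpos _ _, ?_, ?_, ?_⟩
  · -- support condition
    intro x t ht
    have h1 : (↑t : Γ) ∈ (F' : Set Γ) ^ k F'.card := hsupp (↑x) ht
    rw [hcard] at h1
    have himg : (F' : Set Γ) = (Δ.subtype : Δ → Γ) '' (F : Set Δ) := by
      simp [hF'def, Finset.coe_image, Subgroup.coe_subtype]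
    rw [himg, ← Set.image_pow] at h1
    obtain ⟨u, hu, hut⟩ := h1
    have : u = t := Subtype.val_injective hut
    rwa [← this]
  · -- total mass 1
    intro x
    rw [key (η ↑x) (hsuppD _)]
    exact hsum ↑x
  · -- the main estimate
    have habs : ∀ (s x : Γ), Function.support (fun t => |η (s * x) t - η x (s⁻¹ * t)|)
        ⊆ Function.support (η (s * x)) ∪ (fun u => s * u) '' Function.support (η x) := by
      intro s x t ht
      by_cases h1 : η (s * x) t = 0
      · have h2 : η x (s⁻¹ * t) ≠ 0 := by
          intro h2; apply ht; simp [h1, h2]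
        exact Or.inr ⟨s⁻¹ * t, h2, by group⟩
      · exact Or.inl h1
    have hDfin : ∀ (s x : Γ),
        (Function.support (fun t => |η (s * x) t - η x (s⁻¹ * t)|)).Finite :=
      fun s x => (((hsuppfin (s * x)).union ((hsuppfin x).image _)).subset (habs s x))
    -- uniform bound 2 on the Γ-family
    have hb2 : ∀ (s x : Γ), (∑ᶠ t, |η (s * x) t - η x (s⁻¹ * t)|) ≤ 2 := by
      intro s x
      set T : Finset Γ := (hsuppfin (s * x)).toFinset ∪
        Finset.image (fun u => s * u) (hsuppfin x).toFinset with hT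
      have hsub1 : Function.support (η (s * x)) ⊆ (T : Set Γ) := by
        intro t ht
        simp only [hT, Finset.coe_union, Set.mem_union, Finset.coe_image,
          Set.Finite.coe_toFinset]
        exact Or.inl ht
      have hsub2 : Function.support (fun t => η x (s⁻¹ * t)) ⊆ (T : Set Γ) := by
        intro t ht
        simp only [hT, Finset.coe_union, Set.mem_union, Finset.coe_image,
          Set.Finite.coe_toFinset]
        exact Or.inr ⟨s⁻¹ * t, ht, by group⟩
      have hsubD : Function.support (fun t => |η (s * x) t - η x (s⁻¹ * t)|)
          ⊆ (T : Set Γ) := by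
        intro t ht
        rcases habs s x ht with h1 | h1
        · exact hsub1 h1
        · apply hsub2
          obtain ⟨u, hu, rfl⟩ := h1
          simpa [Function.mem_support] using hu
      rw [finsum_eq_sum_of_support_subset _ hsubD]
      have step1 : (∑ t ∈ T, |η (s * x) t - η x (s⁻¹ * t)|)
          ≤ ∑ t ∈ T, (η (s * x) t + η x (s⁻¹ * t)) := by
        refine Finset.sum_le_sum fun t _ => ?_
        calc |η (s * x) t - η x (s⁻¹ * t)| ≤ |η (s * x) t| + |η x (s⁻¹ * t)| :=
              abs_sub _ _
          _ = η (s * x) t + η x (s⁻¹ * t) := by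
              rw [abs_of_nonneg (hpos _ _), abs_of_nonneg (hpos _ _)]
      have e1 : (∑ t ∈ T, η (s * x) t) = 1 := by
        rw [← finsum_eq_sum_of_support_subset _ hsub1]; exact hsum _
      have e2 : (∑ t ∈ T, η x (s⁻¹ * t)) = 1 := by
        rw [← finsum_eq_sum_of_support_subset _ hsub2]
        rw [show (∑ᶠ t, η x (s⁻¹ * t)) = ∑ᶠ t, η x t from
          finsum_comp_equiv (Equiv.mulLeft s⁻¹)]
        exact hsum _
      calc (∑ t ∈ T, |η (s * x) t - η x (s⁻¹ * t)|)
          ≤ ∑ t ∈ T, (η (s * x) t + η x (s⁻¹ * t)) := step1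
        _ = (∑ t ∈ T, η (s * x) t) + ∑ t ∈ T, η x (s⁻¹ * t) := Finset.sum_add_distrib
        _ = 2 := by rw [e1, e2]; norm_num
    have hbdd : ∀ s : Γ, BddAbove (Set.range fun x : Γ =>
        ∑ᶠ t, |η (s * x) t - η x (s⁻¹ * t)|) := by
      intro s
      exact ⟨2, by rintro _ ⟨x, rfl⟩; exact hb2 s x⟩
    -- inner sums over Δ agree with those over Γ
    have hinner : ∀ (s x : Δ),
        (∑ᶠ t : Δ, |η (↑(s * x)) ↑t - η ↑x ↑(s⁻¹ * t)|)
          = ∑ᶠ t : Γ, |η (↑s * ↑x) t - η ↑x ((↑s)⁻¹ * t)| := by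
      intro s x
      have hcoe : ∀ t : Δ, (↑(s⁻¹ * t) : Γ) = (↑s)⁻¹ * ↑t := by intro t; push_cast; ring_nf
      have := key (fun t => |η (↑s * ↑x) t - η ↑x ((↑s)⁻¹ * t)|) ?_
      · rw [← this]
        refine finsum_congr fun t => ?_
        push_cast
        rfl
      · intro t ht
        rcases habs (↑s) (↑x) ht with h1 | h1
        · exact hsuppD _ h1
        · obtain ⟨u, hu, rfl⟩ := h1
          exact Δ.mul_mem s.2 (hsuppD _ hu)
    calc (∑ s ∈ F, ⨆ x : Δ, ∑ᶠ t : Δ, |η (↑(s * x)) ↑t - η ↑x ↑(s⁻¹ * t)|)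
        ≤ ∑ s ∈ F, ⨆ x : Γ, ∑ᶠ t, |η (↑s * x) t - η x ((↑s : Γ)⁻¹ * t)| := by
          refine Finset.sum_le_sum fun s _ => ?_
          haveI : Nonempty Δ := ⟨1⟩
          refine ciSup_le fun x => ?_
          rw [hinner s x]
          exact le_ciSup (hbdd (↑s)) (↑x : Γ)
      _ = ∑ s ∈ F', ⨆ x : Γ, ∑ᶠ t, |η (s * x) t - η x (s⁻¹ * t)| := by
          rw [hF'def, Finset.sum_image (fun a _ b _ hab => Subtype.val_injective hab)]
      _ ≤ 1 / (F'.card : ℝ) := hbound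
      _ = 1 / (F.card : ℝ) := by rw [hcard]
end

section
/- For every k : ℕ → ℕ, the class UE(k) is closed under directed unions: if a group Γ is the union of a directed (under inclusion) family of subgroups, each of which has k as a modulus of uniform exactness, then Γ has k as a modulus of uniform exactness. -/
open scoped Pointwise

lemma finsum_subtype_eq' {Γ : Type*} [Group Γ] (Hi : Subgroup Γ) (f : Γ → ℝ)
    (h0 : ∀ t, t ∉ Hi → f t = 0) : ∑ᶠ t, f t = ∑ᶠ u : Hi, f u := by
  have h1 : ∑ᶠ t, f t = ∑ᶠ t ∈ Set.range ((↑) : Hi → Γ), f t := by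
    rw [← finsum_mem_univ]
    apply finsum_mem_inter_support_eq
    ext t
    simp only [Set.mem_inter_iff, Set.mem_univ, true_and, Function.mem_support]
    constructor
    · intro ht
      refine ⟨⟨⟨t, ?_⟩, rfl⟩, ht⟩
      by_contra h; exact ht (h0 t h)
    · exact fun h => h.2
  rw [h1, finsum_mem_range Subtype.val_injective]

/-- The class `UE(k)` is closed under directed unions: if `Γ` is the union of a
family of subgroups that is directed under inclusion, each of which has `k` as a
modulus of uniform exactness, then `Γ` has `k` as a modulus of uniform exactness. -/
theorem isUEModulus_directed_union (k : ℕ → ℕ) (Γ : Type*) [Group Γ]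
    (ι : Type*) (H : ι → Subgroup Γ)
    (hdir : ∀ i j, ∃ l, H i ≤ H l ∧ H j ≤ H l)
    (hunion : ∀ g : Γ, ∃ i, g ∈ H i)
    (hUE : ∀ i, IsUEModulus k (H i)) :
    IsUEModulus k Γ := by
  classical
  have key : ∀ S : Finset Γ, ∃ i, ∀ g ∈ S, g ∈ H i := by
    intro S
    induction S using Finset.induction_on with
    | empty => exact ⟨(hunion 1).choose, by simp⟩
    | insert _ _ _ ih =>
      rename_i a s _
      obtain ⟨j, hj⟩ := ih
      obtain ⟨l, hl⟩ := hunion a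
      obtain ⟨m, hjm, hlm⟩ := hdir j l
      refine ⟨m, fun g hg => ?_⟩
      rcases Finset.mem_insert.mp hg with rfl | hg
      · exact hlm hl
      · exact hjm (hj g hg)
  intro F h1F hinvF
  obtain ⟨i, hFi⟩ := key F
  set Hi := H i with hHi
  -- the finset F viewed inside Hi
  set F' : Finset Hi := F.subtype (· ∈ Hi) with hF'
  have hmemF' : ∀ u : Hi, u ∈ F' ↔ (u : Γ) ∈ F := by
    intro u; simp [hF', Finset.mem_subtype]
  have hcard : F'.card = F.card := by
    rw [hF', Finset.card_subtype, Finset.filter_true_of_mem hFi]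
  have h1F' : (1 : Hi) ∈ F' := (hmemF' 1).mpr h1F
  have hinvF' : ∀ u ∈ F', u⁻¹ ∈ F' := by
    intro u hu
    exact (hmemF' _).mpr (hinvF _ ((hmemF' u).mp hu))
  obtain ⟨η', hpos', hsupp', hsum', hbnd'⟩ := hUE i F' h1F' hinvF'
  -- section of right cosets
  let σ : Γ → Γ := fun x => Quotient.out (Quotient.mk'' x : Quotient (QuotientGroup.rightRel Hi))
  have hσmem : ∀ x : Γ, x * (σ x)⁻¹ ∈ Hi := by
    intro x
    have h : (Quotient.mk'' (σ x) : Quotient (QuotientGroup.rightRel Hi)) = Quotient.mk'' x :=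
      Quotient.out_eq' _
    exact (QuotientGroup.rightRel_apply).mp (Quotient.eq''.mp h)
  have hσmul : ∀ (s : Γ), s ∈ Hi → ∀ x, σ (s * x) = σ x := by
    intro s hs x
    have h : (Quotient.mk'' (s * x) : Quotient (QuotientGroup.rightRel Hi)) = Quotient.mk'' x := by
      apply Quotient.eq''.mpr
      apply (QuotientGroup.rightRel_apply).mpr
      simpa using hs
    show Quotient.out (Quotient.mk'' (s * x) : Quotient (QuotientGroup.rightRel Hi)) = _
    rw [h]
  let π : Γ → Hi := fun x => ⟨x * (σ x)⁻¹, hσmem x⟩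
  have hπmul : ∀ (s : Hi) (x : Γ), π ((s : Γ) * x) = s * π x := by
    intro s x
    apply Subtype.ext
    show (s : Γ) * x * (σ ((s : Γ) * x))⁻¹ = (s : Γ) * (x * (σ x)⁻¹)
    rw [hσmul _ s.2, mul_assoc]
  have hπsurj : Function.Surjective π := by
    intro y
    refine ⟨(y : Γ) * σ 1, ?_⟩
    have h : σ ((y : Γ) * σ 1) = σ 1 := by
      have h1 : (Quotient.mk'' ((y : Γ) * σ 1) : Quotient (QuotientGroup.rightRel Hi))
          = Quotient.mk'' (σ 1) := by
        apply Quotient.eq''.mpr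
        apply (QuotientGroup.rightRel_apply).mpr
        simpa using y.2
      show Quotient.out (Quotient.mk'' ((y : Γ) * σ 1) : Quotient (QuotientGroup.rightRel Hi)) = _
      rw [h1]
      exact Quotient.out_eq' _ ▸ rfl
    apply Subtype.ext
    show (y : Γ) * σ 1 * (σ ((y : Γ) * σ 1))⁻¹ = (y : Γ)
    rw [h, mul_assoc, mul_inv_cancel, mul_one]
  -- define the extension
  let η : Γ → Γ → ℝ := fun x t => if ht : t ∈ Hi then η' (π x) ⟨t, ht⟩ else 0
  have hηval : ∀ (x : Γ) (u : Hi), η x (u : Γ) = η' (π x) u := by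
    intro x u
    show dite _ _ _ = _
    rw [dif_pos u.2]
  refine ⟨η, ?_, ?_, ?_, ?_⟩
  · intro x t
    show (0:ℝ) ≤ dite _ _ _
    split
    · exact hpos' _ _
    · exact le_refl 0
  · intro x t ht
    have htH : t ∈ Hi := by
      by_contra h
      exact ht (by show dite _ _ _ = 0; rw [dif_neg h])
    have ht' : η' (π x) ⟨t, htH⟩ ≠ 0 := by
      intro h
      apply ht
      show dite _ _ _ = 0
      rw [dif_pos htH, h]
    have hmem : (⟨t, htH⟩ : Hi) ∈ (F' : Set Hi) ^ k F'.card := hsupp' (π x) ht'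
    have himg : Hi.subtype '' ((F' : Set Hi) ^ k F'.card)
        = (Hi.subtype '' (F' : Set Hi)) ^ k F'.card := Set.image_pow Hi.subtype _ _
    have hFim : Hi.subtype '' (F' : Set Hi) = (F : Set Γ) := by
      ext g
      simp only [Set.mem_image, Finset.mem_coe, Subgroup.coe_subtype]
      constructor
      · rintro ⟨u, hu, rfl⟩; exact (hmemF' u).mp hu
      · intro hg; exact ⟨⟨g, hFi g hg⟩, (hmemF' _).mpr hg, rfl⟩
    have : t ∈ Hi.subtype '' ((F' : Set Hi) ^ k F'.card) := ⟨⟨t, htH⟩, hmem, rfl⟩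
    rw [himg, hFim, hcard] at this
    exact this
  · intro x
    rw [finsum_subtype_eq' Hi (η x) (fun t ht => by show dite _ _ _ = 0; rw [dif_neg ht])]
    calc ∑ᶠ u : Hi, η x (u : Γ) = ∑ᶠ u : Hi, η' (π x) u := by
          exact finsum_congr (fun u => hηval x u)
      _ = 1 := hsum' (π x)
  · -- the equivariance bound
    have hterm : ∀ s, ∀ hs : s ∈ F, (⨆ x : Γ, ∑ᶠ t, |η (s * x) t - η x (s⁻¹ * t)|)
        = ⨆ y : Hi, ∑ᶠ u : Hi, |η' ((⟨s, hFi s hs⟩ : Hi) * y) u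
            - η' y ((⟨s, hFi s hs⟩ : Hi)⁻¹ * u)| := by
      intro s hs
      set s' : Hi := ⟨s, hFi s hs⟩ with hs'
      have hpoint : ∀ x : Γ, ∑ᶠ t, |η (s * x) t - η x (s⁻¹ * t)|
          = ∑ᶠ u : Hi, |η' (s' * π x) u - η' (π x) (s'⁻¹ * u)| := by
        intro x
        rw [finsum_subtype_eq' Hi _ ?_]
        · apply finsum_congr
          intro u
          have e1 : η (s * x) (u : Γ) = η' (s' * π x) u := by
            rw [show s * x = (s' : Γ) * x from rfl, hηval, hπmul]
          have e2 : η x (s⁻¹ * (u : Γ)) = η' (π x) (s'⁻¹ * u) := by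
            rw [show s⁻¹ * (u : Γ) = ((s'⁻¹ * u : Hi) : Γ) from rfl, hηval]
          rw [e1, e2]
        · intro t ht
          have h1 : η (s * x) t = 0 := by
            show dite _ _ _ = 0
            rw [dif_neg ht]
          have h2 : η x (s⁻¹ * t) = 0 := by
            have : s⁻¹ * t ∉ Hi := by
              intro h
              exact ht (by have := Hi.mul_mem s'.2 h; rwa [show (s' : Γ) = s from rfl, mul_inv_cancel_left] at this)
            show dite _ _ _ = 0
            rw [dif_neg this]
          rw [h1, h2, sub_zero, abs_zero]
      calc (⨆ x : Γ, ∑ᶠ t, |η (s * x) t - η x (s⁻¹ * t)|)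
          = ⨆ x : Γ, ∑ᶠ u : Hi, |η' (s' * π x) u - η' (π x) (s'⁻¹ * u)| := by
            exact iSup_congr hpoint
        _ = ⨆ y : Hi, ∑ᶠ u : Hi, |η' (s' * y) u - η' y (s'⁻¹ * u)| := by
            show sSup _ = sSup _
            congr 1
            exact hπsurj.range_comp
              (fun y : Hi => ∑ᶠ u : Hi, |η' (s' * y) u - η' y (s'⁻¹ * u)|)
    calc (∑ s ∈ F, ⨆ x : Γ, ∑ᶠ t, |η (s * x) t - η x (s⁻¹ * t)|)
        = ∑ s' ∈ F', ⨆ y : Hi, ∑ᶠ u : Hi, |η' (s' * y) u - η' y (s'⁻¹ * u)| := by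
          refine Finset.sum_bij' (fun s hs => (⟨s, hFi s hs⟩ : Hi)) (fun u _ => (u : Γ))
            ?_ ?_ ?_ ?_ ?_
          · intro s hs; exact (hmemF' _).mpr hs
          · intro u hu; exact (hmemF' u).mp hu
          · intro s hs; rfl
          · intro u hu; exact Subtype.ext rfl
          · intro s hs; exact hterm s hs
      _ ≤ 1 / (F'.card : ℝ) := hbnd'
      _ = 1 / (F.card : ℝ) := by rw [hcard]
end

section
/- An amenable group is uniformly exact if and only if it is uniformly amenable, with the same modulus: for every k : ℕ → ℕ and every amenable group Δ, the group Δ has k as a modulus of uniform exactness if and only if Δ is uniformly amenable with modulus k, i.e., for every finite subset F ⊆ Δ with 1 ∈ F and F = F⁻¹ there exists a nonnegative finitely supported function ξ : Δ → ℝ with Σ_t ξ(t) = 1, supported in the product set F^{k(|F|)}, such that Σ_{s ∈ F} ‖ξ − s·ξ‖₁ ≤ 1/|F|. -/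
open scoped Pointwise

/-- A group `G` is amenable: there is a left-invariant mean on the space `ℓ∞(G)` of
bounded real-valued functions on `G`, i.e. a positive unital linear functional that is
invariant under left translations. -/
def IsAmenableGroup (G : Type*) [Group G] : Prop :=
  ∃ m : lp (fun _ : G => ℝ) ⊤ →ₗ[ℝ] ℝ,
    (∀ f : lp (fun _ : G => ℝ) ⊤, (∀ x, 0 ≤ f x) → 0 ≤ m f) ∧
    (∀ f : lp (fun _ : G => ℝ) ⊤, (∀ x, f x = 1) → m f = 1) ∧
    (∀ (g : G) (f fg : lp (fun _ : G => ℝ) ⊤),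
      (∀ x, fg x = f (g⁻¹ * x)) → m fg = m f)

/-- A group `Δ` is uniformly amenable with modulus `k`: for every finite unital
symmetric `F ⊆ Δ` there is a probability density `ξ` on `Δ` supported in
`F^{k(|F|)}` with `∑_{s ∈ F} ‖ξ - s·ξ‖₁ ≤ 1/|F|`. -/
def IsUAModulus (k : ℕ → ℕ) (Δ : Type*) [Group Δ] : Prop :=
  ∀ F : Finset Δ, (1 : Δ) ∈ F → (∀ t ∈ F, t⁻¹ ∈ F) →
    ∃ ξ : Δ → ℝ,
      (∀ t, 0 ≤ ξ t) ∧
      (Function.support ξ ⊆ (F : Set Δ) ^ k F.card) ∧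
      (∑ᶠ t, ξ t = 1) ∧
      (∑ s ∈ F, ∑ᶠ t, |ξ t - ξ (s⁻¹ * t)|) ≤ 1 / (F.card : ℝ)

section Helpers

variable {Δ : Type*} [Group Δ]

private lemma memℓp_of_bound (f : Δ → ℝ) (C : ℝ) (h : ∀ x, |f x| ≤ C) :
    Memℓp f ⊤ := by
  rw [memℓp_infty_iff]
  refine ⟨C, ?_⟩
  rintro y ⟨x, rfl⟩
  simpa [Real.norm_eq_abs] using h x

private lemma lp_sum_apply {ι : Type*} (s : Finset ι) (f : ι → lp (fun _ : Δ => ℝ) ⊤)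
    (x : Δ) : (∑ i ∈ s, f i) x = ∑ i ∈ s, f i x := by
  classical
  induction s using Finset.induction with
  | empty => rfl
  | insert _ _ h ih =>
      rw [Finset.sum_insert h, Finset.sum_insert h, ← ih]
      exact congrFun (lp.coeFn_add _ _) x

private lemma m_mono (m : lp (fun _ : Δ => ℝ) ⊤ →ₗ[ℝ] ℝ)
    (hpos : ∀ f : lp (fun _ : Δ => ℝ) ⊤, (∀ x, 0 ≤ f x) → 0 ≤ m f)
    (f g : lp (fun _ : Δ => ℝ) ⊤) (h : ∀ x, f x ≤ g x) : m f ≤ m g := by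
  have h0 : 0 ≤ m (g - f) := by
    refine hpos _ fun x => ?_
    have := congrFun (lp.coeFn_sub g f) x
    simp only [Pi.sub_apply] at this
    rw [this]
    linarith [h x]
  rw [map_sub] at h0
  linarith

private lemma m_const (m : lp (fun _ : Δ => ℝ) ⊤ →ₗ[ℝ] ℝ)
    (hone : ∀ f : lp (fun _ : Δ => ℝ) ⊤, (∀ x, f x = 1) → m f = 1)
    (c : ℝ) (f : lp (fun _ : Δ => ℝ) ⊤) (hf : ∀ x, f x = c) : m f = c := by
  set one : lp (fun _ : Δ => ℝ) ⊤ :=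
    ⟨fun _ => (1 : ℝ), memℓp_of_bound _ 1 (by intro x; simp)⟩ with hone_def
  have h1 : m one = 1 := hone _ fun x => rfl
  have hfc : f = c • one := by
    apply lp.ext
    funext x
    have := congrFun (lp.coeFn_smul c one) x
    simp only [Pi.smul_apply] at this
    rw [hf x, this]
    show c = c • (1 : ℝ)
    simp
  rw [hfc, map_smul, h1, smul_eq_mul, mul_one]

end Helpers

/-- An amenable group is uniformly exact if and only if it is uniformly amenable,
with the same modulus. -/
theorem amenable_isUEModulus_iff_isUAModulus (k : ℕ → ℕ) (Δ : Type*) [Group Δ]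
    (hΔ : IsAmenableGroup Δ) : IsUEModulus k Δ ↔ IsUAModulus k Δ := by
  classical
  obtain ⟨m, hpos, hone, hminv⟩ := hΔ
  constructor
  · -- UE → UA : average the family `η` with the invariant mean.
    intro hUE F h1F hFinv
    obtain ⟨η, hnn, hsupp, hsum, hest⟩ := hUE F h1F hFinv
    set n : ℕ := k F.card with hn
    set Fk : Finset Δ := F ^ n with hFk
    have hsupp' : ∀ x, Function.support (η x) ⊆ (Fk : Set Δ) := by
      intro x
      rw [hFk, Finset.coe_pow]
      exact hsupp x
    have hfin : ∀ x, (Function.support (η x)).Finite :=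
      fun x => Fk.finite_toSet.subset (hsupp' x)
    have hle1 : ∀ x t, η x t ≤ 1 := by
      intro x t
      have := single_le_finsum t (hfin x) (hnn x)
      rwa [hsum x] at this
    have habs : ∀ x t, |η x t| ≤ 1 := fun x t => by
      rw [abs_of_nonneg (hnn x t)]; exact hle1 x t
    -- the evaluation elements of ℓ∞
    set E : Δ → lp (fun _ : Δ => ℝ) ⊤ :=
      fun t => ⟨fun x => η x t, memℓp_of_bound _ 1 fun x => habs x t⟩ with hE
    set ξ : Δ → ℝ := fun t => m (E t) with hξ
    have hEapp : ∀ t x, E t x = η x t := fun _ _ => rfl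
    have hξnn : ∀ t, 0 ≤ ξ t := fun t => hpos _ fun x => hnn x t
    have hξsupp : Function.support ξ ⊆ (F : Set Δ) ^ n := by
      intro t ht
      by_contra hmem
      apply ht
      have hz : ∀ x, η x t = 0 := by
        intro x
        by_contra hzz
        exact hmem (hsupp x hzz)
      have hE0 : E t = 0 := by
        apply lp.ext
        funext x
        exact hz x
      show ξ t = 0
      rw [hξ]
      simp [hE0]
    have hξsupp' : Function.support ξ ⊆ (Fk : Set Δ) := by
      rw [hFk, Finset.coe_pow]; exact hξsupp
    -- total mass one
    have hηsum : ∀ x, ∑ t ∈ Fk, η x t = 1 := by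
      intro x
      rw [← finsum_eq_finset_sum_of_support_subset _ (hsupp' x)]
      exact hsum x
    have hξsum : ∑ᶠ t, ξ t = 1 := by
      rw [finsum_eq_finset_sum_of_support_subset _ hξsupp']
      have : ∑ t ∈ Fk, ξ t = m (∑ t ∈ Fk, E t) := by
        rw [map_sum]
      rw [this]
      exact hone _ fun x => by rw [lp_sum_apply]; exact hηsum x
    refine ⟨ξ, hξnn, hξsupp, hξsum, ?_⟩
    -- the ℓ¹ estimate
    refine le_trans (Finset.sum_le_sum ?_) hest
    intro s hs
    set T : Finset Δ := Fk ∪ Fk.image (fun u => s * u) with hT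
    have hmemT₁ : ∀ t : Δ, η (s * t * t⁻¹ * t) 1 = 0 → True := fun _ _ => trivial
    -- support facts
    have hsubT₁ : ∀ x, Function.support (η x) ⊆ (T : Set Δ) := by
      intro x
      refine (hsupp' x).trans ?_
      intro t htk
      simp only [hT, Finset.coe_union, Set.mem_union]
      exact Or.inl htk
    have hsubT₂ : ∀ x, Function.support (fun t => η x (s⁻¹ * t)) ⊆ (T : Set Δ) := by
      intro x t ht
      have h1 : s⁻¹ * t ∈ Fk := hsupp' x ht
      simp only [hT, Finset.coe_union, Set.mem_union, Finset.coe_image, Set.mem_image]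
      refine Or.inr ⟨s⁻¹ * t, by exact_mod_cast h1, by group⟩
    have hsubTA : ∀ x, Function.support (fun t => |η (s * x) t - η x (s⁻¹ * t)|) ⊆
        (T : Set Δ) := by
      intro x t ht
      simp only [Function.mem_support, ne_eq, abs_eq_zero] at ht
      by_cases h1 : η (s * x) t = 0
      · have h2 : η x (s⁻¹ * t) ≠ 0 := fun hc => ht (by rw [h1, hc, sub_zero])
        exact hsubT₂ x h2
      · exact hsubT₁ (s * x) h1
    -- bound for the sup
    have hTsum₁ : ∀ x, ∑ t ∈ T, η (s * x) t = 1 := by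
      intro x
      rw [← finsum_eq_finset_sum_of_support_subset _ (hsubT₁ (s * x))]
      exact hsum (s * x)
    have hTsum₂ : ∀ x, ∑ t ∈ T, η x (s⁻¹ * t) = 1 := by
      intro x
      rw [← finsum_eq_finset_sum_of_support_subset _ (hsubT₂ x)]
      have := finsum_comp_equiv (Equiv.mulLeft s⁻¹) (f := η x)
      simp only [Equiv.coe_mulLeft] at this
      rw [this]
      exact hsum x
    have hfinA : ∀ x, ∑ᶠ t, |η (s * x) t - η x (s⁻¹ * t)| =
        ∑ t ∈ T, |η (s * x) t - η x (s⁻¹ * t)| :=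
      fun x => finsum_eq_finset_sum_of_support_subset _ (hsubTA x)
    have hboundA : ∀ x, ∑ᶠ t, |η (s * x) t - η x (s⁻¹ * t)| ≤ 2 := by
      intro x
      rw [hfinA x]
      calc ∑ t ∈ T, |η (s * x) t - η x (s⁻¹ * t)|
          ≤ ∑ t ∈ T, (η (s * x) t + η x (s⁻¹ * t)) := by
            refine Finset.sum_le_sum fun t _ => ?_
            calc |η (s * x) t - η x (s⁻¹ * t)| ≤ |η (s * x) t| + |η x (s⁻¹ * t)| :=
                  abs_sub _ _
              _ = η (s * x) t + η x (s⁻¹ * t) := by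
                  rw [abs_of_nonneg (hnn _ _), abs_of_nonneg (hnn _ _)]
        _ = 2 := by rw [Finset.sum_add_distrib, hTsum₁ x, hTsum₂ x]; norm_num
    have hbdd : BddAbove (Set.range fun x : Δ =>
        ∑ᶠ t, |η (s * x) t - η x (s⁻¹ * t)|) := by
      refine ⟨2, ?_⟩
      rintro y ⟨x, rfl⟩
      exact hboundA x
    -- the shifted evaluation elements and the difference elements
    set Es : Δ → lp (fun _ : Δ => ℝ) ⊤ :=
      fun t => ⟨fun x => η (s * x) t, memℓp_of_bound _ 1 fun x => habs (s * x) t⟩ with hEs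
    have hEsm : ∀ t, m (Es t) = m (E t) := by
      intro t
      refine hminv s⁻¹ (E t) (Es t) fun x => ?_
      show η (s * x) t = η (s⁻¹⁻¹ * x) t
      rw [inv_inv]
    set A : Δ → lp (fun _ : Δ => ℝ) ⊤ :=
      fun t => ⟨fun x => |η (s * x) t - η x (s⁻¹ * t)|,
        memℓp_of_bound _ 2 fun x => by
          rw [abs_abs]
          calc |η (s * x) t - η x (s⁻¹ * t)| ≤ |η (s * x) t| + |η x (s⁻¹ * t)| := abs_sub _ _
            _ ≤ 1 + 1 := add_le_add (habs _ _) (habs _ _)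
            _ = 2 := by norm_num⟩ with hA
    have hperT : ∀ t, |ξ t - ξ (s⁻¹ * t)| ≤ m (A t) := by
      intro t
      have hdiff : ξ t - ξ (s⁻¹ * t) = m (Es t - E (s⁻¹ * t)) := by
        rw [map_sub, hEsm t]
      have happ : ∀ x, (Es t - E (s⁻¹ * t)) x = η (s * x) t - η x (s⁻¹ * t) := by
        intro x
        have := congrFun (lp.coeFn_sub (Es t) (E (s⁻¹ * t))) x
        exact this.trans rfl
      rw [hdiff, abs_le]
      constructor
      · have : m (-(Es t - E (s⁻¹ * t))) ≤ m (A t) := by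
          refine m_mono m hpos _ _ fun x => ?_
          have hneg := congrFun (lp.coeFn_neg (Es t - E (s⁻¹ * t))) x
          simp only [Pi.neg_apply] at hneg
          rw [hneg, happ x]
          show -(η (s * x) t - η x (s⁻¹ * t)) ≤ |η (s * x) t - η x (s⁻¹ * t)|
          exact neg_le_abs _
        rw [map_neg] at this
        linarith
      · refine m_mono m hpos _ _ fun x => ?_
        rw [happ x]
        exact le_abs_self _
    -- support of the ξ-difference
    have hsubTξ : Function.support (fun t => |ξ t - ξ (s⁻¹ * t)|) ⊆ (T : Set Δ) := by
      intro t ht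
      simp only [Function.mem_support, ne_eq, abs_eq_zero] at ht
      by_cases h1 : ξ t = 0
      · have h2 : ξ (s⁻¹ * t) ≠ 0 := fun hc => ht (by rw [h1, hc, sub_zero])
        have : s⁻¹ * t ∈ (Fk : Set Δ) := hξsupp' h2
        simp only [hT, Finset.coe_union, Set.mem_union, Finset.coe_image, Set.mem_image]
        exact Or.inr ⟨s⁻¹ * t, by exact_mod_cast this, by group⟩
      · have : t ∈ (Fk : Set Δ) := hξsupp' h1
        simp only [hT, Finset.coe_union, Set.mem_union]
        exact Or.inl this
    calc ∑ᶠ t, |ξ t - ξ (s⁻¹ * t)|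
        = ∑ t ∈ T, |ξ t - ξ (s⁻¹ * t)| :=
          finsum_eq_finset_sum_of_support_subset _ hsubTξ
      _ ≤ ∑ t ∈ T, m (A t) := Finset.sum_le_sum fun t _ => hperT t
      _ = m (∑ t ∈ T, A t) := (map_sum m A T).symm
      _ ≤ ⨆ x : Δ, ∑ᶠ t, |η (s * x) t - η x (s⁻¹ * t)| := by
          set Ms : ℝ := ⨆ x : Δ, ∑ᶠ t, |η (s * x) t - η x (s⁻¹ * t)| with hMs
          have hconstmem : Memℓp (fun _ : Δ => Ms) ⊤ :=
            memℓp_of_bound _ |Ms| fun x => le_refl _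
          set CMs : lp (fun _ : Δ => ℝ) ⊤ := ⟨fun _ => Ms, hconstmem⟩ with hCMs
          have h1 : m (∑ t ∈ T, A t) ≤ m CMs := by
            refine m_mono m hpos _ _ fun x => ?_
            rw [lp_sum_apply]
            show ∑ t ∈ T, |η (s * x) t - η x (s⁻¹ * t)| ≤ Ms
            rw [← hfinA x]
            exact le_ciSup hbdd x
          have h2 : m CMs = Ms := m_const m hone Ms CMs fun x => rfl
          rw [h2] at h1
          exact h1
  · -- UA → UE : use the constant family.
    intro hUA F h1F hFinv
    obtain ⟨ξ, hnn, hsupp, hsum, hest⟩ := hUA F h1F hFinv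
    refine ⟨fun _ => ξ, fun _ t => hnn t, fun _ => hsupp, fun _ => hsum, ?_⟩
    refine le_trans (le_of_eq (Finset.sum_congr rfl fun s _ => ?_)) hest
    exact ciSup_const
end

section
/- The class of uniformly exact groups is closed under extensions, with modulus depending only on the given modulus: for every k : ℕ → ℕ there exists k₁ : ℕ → ℕ such that whenever a group Γ has a normal subgroup Δ ⊴ Γ with both Δ and the quotient Γ/Δ having k as a modulus of uniform exactness, the group Γ has k₁ as a modulus of uniform exactness. -/
open scoped Pointwise
open Function

section Helpers

variable {G : Type*} [Group G]

lemma inv_mem_finset_pow [DecidableEq G] {A : Finset G} (hsym : ∀ t ∈ A, t⁻¹ ∈ A) :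
    ∀ (i : ℕ) (t : G), t ∈ A ^ i → t⁻¹ ∈ A ^ i := by
  classical
  intro i
  induction i with
  | zero =>
    intro t ht
    simp only [pow_zero, Finset.mem_one] at ht ⊢
    simp [ht]
  | succ i ih =>
    intro t ht
    rw [pow_succ] at ht
    rw [pow_succ']
    rcases Finset.mem_mul.mp ht with ⟨y, hy, z, hz, rfl⟩
    rw [mul_inv_rev]
    exact Finset.mul_mem_mul (hsym z hz) (ih _ hy)

lemma sum_finset_le_finsum {α : Type*} (f : α → ℝ) {s : Finset α} (hs : support f ⊆ ↑s)
    (hf : ∀ t, 0 ≤ f t) (u : Finset α) : ∑ t ∈ u, f t ≤ ∑ᶠ t, f t := by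
  classical
  have h1 : support f ⊆ ↑(s ∪ u) := hs.trans (Finset.coe_subset.mpr Finset.subset_union_left)
  rw [finsum_eq_sum_of_support_subset f h1]
  exact Finset.sum_le_sum_of_subset_of_nonneg Finset.subset_union_right
    (fun i _ _ => hf i)

lemma defect_le_two (η : G → G → ℝ) (S : Finset G) (hpos : ∀ x t, 0 ≤ η x t)
    (hsupp : ∀ x, support (η x) ⊆ ↑S) (hsum : ∀ x, ∑ᶠ t, η x t = 1) (e x : G) :
    ∑ᶠ t, |η (e * x) t - η x (e⁻¹ * t)| ≤ 2 := by
  classical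
  set W : Finset G := S ∪ S.image (fun t => e * t) with hW
  have hsupp' : support (fun t => |η (e * x) t - η x (e⁻¹ * t)|) ⊆ ↑W := by
    intro t ht
    simp only [mem_support, ne_eq, abs_eq_zero, sub_eq_zero] at ht
    by_cases h1 : η (e * x) t = 0
    · by_cases h2 : η x (e⁻¹ * t) = 0
      · exact absurd (h1.trans h2.symm) ht
      · have : e⁻¹ * t ∈ S := hsupp x h2
        simp only [hW, Finset.coe_union, Set.mem_union, Finset.coe_image, Set.mem_image]
        exact Or.inr ⟨e⁻¹ * t, by exact_mod_cast this, by group⟩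
    · have : t ∈ S := hsupp (e * x) h1
      simp only [hW, Finset.coe_union, Set.mem_union]
      exact Or.inl (by exact_mod_cast this)
  rw [finsum_eq_sum_of_support_subset _ hsupp']
  have hb : ∀ t ∈ W, |η (e * x) t - η x (e⁻¹ * t)| ≤ η (e * x) t + η x (e⁻¹ * t) := by
    intro t _
    refine (abs_sub _ _).trans ?_
    rw [abs_of_nonneg (hpos _ _), abs_of_nonneg (hpos _ _)]
  refine (Finset.sum_le_sum hb).trans ?_
  rw [Finset.sum_add_distrib]
  have h1 : ∑ t ∈ W, η (e * x) t ≤ 1 := by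
    rw [← hsum (e * x)]
    exact sum_finset_le_finsum _ (hsupp _) (hpos _) W
  have h2 : ∑ t ∈ W, η x (e⁻¹ * t) ≤ 1 := by
    have := Finset.sum_image (f := η x) (s := W) (g := fun t => e⁻¹ * t)
      (fun a _ b _ h => by simpa using h)
    rw [← this, ← hsum x]
    exact sum_finset_le_finsum _ (hsupp _) (hpos _) _
  linarith

end Helpers

/-- The exponent used in the key dichotomy lemma. -/
def UENfun (k : ℕ → ℕ) (a m : ℕ) : ℕ := m * ((Finset.range (a ^ m + 1)).sup k) + m

section Key

variable {G : Type*} [Group G]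

lemma exists_stab [DecidableEq G] (A : Finset G) (h1 : (1:G) ∈ A) {m : ℕ} (hm : 1 ≤ m)
    (hcard : (A ^ m).card < m) : ∃ j, 1 ≤ j ∧ j < m ∧ A ^ (j + 1) = A ^ j := by
  by_contra hno
  push_neg at hno
  have key : ∀ j, 1 ≤ j → j ≤ m → j ≤ (A ^ j).card := by
    intro j
    induction j with
    | zero => omega
    | succ i ih =>
      intro _ him
      by_cases hi : i = 0
      · subst hi
        simpa using Finset.card_pos.mpr ⟨1, by simpa using h1⟩
      · have hi1 : 1 ≤ i := by omega
        have hlt : i < m := by omega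
        have hsub : A ^ i ⊆ A ^ (i + 1) := Finset.pow_subset_pow_right h1 (Nat.le_succ i)
        have hne : A ^ (i + 1) ≠ A ^ i := hno i hi1 hlt
        have : (A ^ i).card < (A ^ (i + 1)).card :=
          Finset.card_lt_card (hsub.ssubset_of_ne (Ne.symm hne))
        have := ih hi1 (by omega)
        omega
  exact absurd (key m hm le_rfl) (by omega)

lemma UE_key {k : ℕ → ℕ} (hG : IsUEModulus k G)
    (A : Finset G) (h1 : (1:G) ∈ A) (hsym : ∀ t ∈ A, t⁻¹ ∈ A) (m : ℕ) (hm : 1 ≤ m) :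
    ∃ μ : G → G → ℝ,
      (∀ x t, 0 ≤ μ x t) ∧
      (∀ x, Function.support (μ x) ⊆ (A : Set G) ^ (UENfun k A.card m)) ∧
      (∀ x, ∑ᶠ t, μ x t = 1) ∧
      (∀ e ∈ A, ∀ x, ∑ᶠ t, |μ (e * x) t - μ x (e⁻¹ * t)| ≤ 1 / (m : ℝ)) := by
  classical
  have hmR : (0:ℝ) < m := by exact_mod_cast hm
  set N := UENfun k A.card m with hN
  have hmN : m ≤ N := by simp [hN, UENfun]
  have hA1m : A ⊆ A ^ m := by
    have := Finset.pow_subset_pow_right h1 hm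
    simpa using this
  by_cases hbig : m ≤ (A ^ m).card
  -- Case A : the ball is big, apply UE of G
  · set B := A ^ m with hB
    have h1B : (1:G) ∈ B := Finset.one_mem_pow h1
    have hsymB : ∀ t ∈ B, t⁻¹ ∈ B := fun t ht => inv_mem_finset_pow hsym m t ht
    obtain ⟨η, hpos, hsupp, hsum, hdef⟩ := hG B h1B hsymB
    -- convert support to Finset form
    have hsuppF : ∀ x, support (η x) ⊆ ↑(B ^ (k B.card)) := by
      intro x
      rw [Finset.coe_pow]
      exact hsupp x
    -- per-element defect extraction
    have hext : ∀ e ∈ B, ∀ x, ∑ᶠ t, |η (e * x) t - η x (e⁻¹ * t)| ≤ 1 / (B.card : ℝ) := by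
      intro e he x
      have hbdd : BddAbove (Set.range fun y => ∑ᶠ t, |η (e * y) t - η y (e⁻¹ * t)|) := by
        refine ⟨2, ?_⟩
        rintro _ ⟨y, rfl⟩
        exact defect_le_two η (B ^ (k B.card)) hpos hsuppF hsum e y
      have h1' : (∑ᶠ t, |η (e * x) t - η x (e⁻¹ * t)|) ≤
          ⨆ y : G, ∑ᶠ t, |η (e * y) t - η y (e⁻¹ * t)| := le_ciSup hbdd x
      have h2' : (⨆ y : G, ∑ᶠ t, |η (e * y) t - η y (e⁻¹ * t)|) ≤
          ∑ s ∈ B, ⨆ y : G, ∑ᶠ t, |η (s * y) t - η y (s⁻¹ * t)| := by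
        refine Finset.single_le_sum (f := fun s => ⨆ y : G, ∑ᶠ t, |η (s * y) t - η y (s⁻¹ * t)|)
          (fun s _ => ?_) he
        exact Real.iSup_nonneg fun y => finsum_nonneg fun t => abs_nonneg _
      exact h1'.trans (h2'.trans hdef)
    refine ⟨η, hpos, ?_, hsum, ?_⟩
    · intro x
      refine (hsupp x).trans ?_
      have hcoe : (B : Set G) = (A : Set G) ^ m := by rw [hB, Finset.coe_pow]
      rw [hcoe, ← pow_mul]
      -- (A : Set G) ^ (m * k B.card) ⊆ (A : Set G) ^ N
      have hle : m * k B.card ≤ N := by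
        rw [hN, UENfun]
        have hcard : B.card ≤ A.card ^ m := Finset.card_pow_le
        have hsup : k B.card ≤ (Finset.range (A.card ^ m + 1)).sup k :=
          Finset.le_sup (Finset.mem_range.mpr (by omega))
        exact le_trans (Nat.mul_le_mul_left _ hsup) (Nat.le_add_right _ _)
      have : (A : Set G) ^ (m * k B.card) ⊆ (A : Set G) ^ N := by
        rw [← Finset.coe_pow, ← Finset.coe_pow]
        exact Finset.coe_subset.mpr (Finset.pow_subset_pow_right h1 hle)
      exact this
    · intro e he x
      refine (hext e (hA1m he) x).trans ?_
      apply one_div_le_one_div_of_le hmR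
      exact_mod_cast hbig
  -- Case B : the ball stabilizes; A generates a finite subgroup
  · push_neg at hbig
    obtain ⟨j, hj1, hjm, hstabj⟩ := exists_stab A h1 hm hbig
    have stab : ∀ i, j ≤ i → A ^ i = A ^ j := by
      intro i hi
      induction i, hi using Nat.le_induction with
      | base => rfl
      | succ i hi ih => rw [pow_succ, ih, ← pow_succ, hstabj]
    -- the subgroup
    set Λ : Subgroup G :=
      { carrier := ↑(A ^ j)
        one_mem' := by
          simp only [Finset.mem_coe]
          exact Finset.one_mem_pow h1
        mul_mem' := by
          intro a b ha hb
          simp only [Finset.mem_coe] at ha hb ⊢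
          have : a * b ∈ A ^ j * A ^ j := Finset.mul_mem_mul ha hb
          rwa [← pow_add, stab (j + j) (by omega)] at this
        inv_mem' := by
          intro a ha
          simp only [Finset.mem_coe] at ha ⊢
          exact inv_mem_finset_pow hsym j a ha } with hΛ
    have hmemΛ : ∀ a : G, a ∈ Λ ↔ a ∈ A ^ j := fun a => Iff.rfl
    set r : G → G := fun x => (Quotient.mk'' x : Quotient (QuotientGroup.rightRel Λ)).out
      with hr
    have hr1 : ∀ x : G, x * (r x)⁻¹ ∈ Λ := by
      intro x
      have : (Quotient.mk'' (r x) : Quotient (QuotientGroup.rightRel Λ)) = Quotient.mk'' x :=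
        Quotient.out_eq' _
      have hrel := Quotient.exact' this
      exact (QuotientGroup.rightRel_apply).mp hrel
    have hr2 : ∀ e : G, e ∈ Λ → ∀ x : G, r (e * x) = r x := by
      intro e he x
      have : (Quotient.mk'' (e * x) : Quotient (QuotientGroup.rightRel Λ)) = Quotient.mk'' x := by
        apply Quotient.sound'
        apply (QuotientGroup.rightRel_apply).mpr
        have : x * (e * x)⁻¹ = e⁻¹ := by group
        rw [this]
        exact Λ.inv_mem he
      exact congrArg Quotient.out this
    refine ⟨fun x t => if t = x * (r x)⁻¹ then 1 else 0, ?_, ?_, ?_, ?_⟩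
    · intro x t; positivity
    · intro x t ht
      simp only [mem_support, ne_eq, ite_eq_right_iff, not_forall] at ht
      obtain ⟨rfl, -⟩ := ht
      have : x * (r x)⁻¹ ∈ A ^ j := hr1 x
      have hsub : A ^ j ⊆ A ^ N := Finset.pow_subset_pow_right h1 (by omega)
      rw [← Finset.coe_pow]
      exact_mod_cast hsub this
    · intro x
      have hs : support (fun t => if t = x * (r x)⁻¹ then (1:ℝ) else 0) ⊆
          ↑({x * (r x)⁻¹} : Finset G) := by
        intro t ht
        simp only [mem_support, ne_eq, ite_eq_right_iff, not_forall] at ht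
        simp [ht.1]
      rw [finsum_eq_sum_of_support_subset _ hs, Finset.sum_singleton]
      simp
    · intro e he x
      have hA1j : A ⊆ A ^ j := by
        have := Finset.pow_subset_pow_right h1 hj1
        simpa using this
      have heΛ : e ∈ Λ := (hmemΛ e).mpr (hA1j he)
      have hzero : ∀ t : G, ((if t = (e * x) * (r (e * x))⁻¹ then (1:ℝ) else 0)
          - (if e⁻¹ * t = x * (r x)⁻¹ then (1:ℝ) else 0)) = 0 := by
        intro t
        rw [hr2 e heΛ x]
        have hiff : (t = (e * x) * (r x)⁻¹) ↔ (e⁻¹ * t = x * (r x)⁻¹) := by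
          constructor
          · intro h; rw [h]; group
          · intro h
            have : t = e * (e⁻¹ * t) := by group
            rw [this, h]; group
        by_cases hc : t = (e * x) * (r x)⁻¹
        · rw [if_pos hc, if_pos (hiff.mp hc)]; ring
        · rw [if_neg hc, if_neg (fun hh => hc (hiff.mpr hh))]; ring
      have : (fun t : G => |(if t = (e * x) * (r (e * x))⁻¹ then (1:ℝ) else 0)
          - (if e⁻¹ * t = x * (r x)⁻¹ then (1:ℝ) else 0)|) = fun _ => 0 := by
        funext t
        rw [hzero t, abs_zero]
      rw [this, finsum_zero]
      positivity

end Key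

lemma ue_arith (x : ℝ) (hx : 0 < x) : x * (2 / (2 * x ^ 2)) = 1 / x := by
  field_simp

/-! ### The numeric functions for the extension theorem -/

def UEm (n : ℕ) : ℕ := 2 * n ^ 2
def UENstar (k : ℕ → ℕ) (n : ℕ) : ℕ := (Finset.range (n + 1)).sup fun a => UENfun k a (UEm n)
def UEL (k : ℕ → ℕ) (n : ℕ) : ℕ := UENstar k n + 1
def UEaux (k : ℕ → ℕ) (n : ℕ) : ℕ := n ^ (2 * UEL k n + 1)
def UENd (k : ℕ → ℕ) (n : ℕ) : ℕ := (Finset.range (UEaux k n + 1)).sup fun a => UENfun k a (UEm n)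
def UEK (k : ℕ → ℕ) (n : ℕ) : ℕ := UEL k n + (2 * UEL k n + 1) * UENd k n


/-- The class of uniformly exact groups is closed under extensions, with modulus
depending only on the given modulus: for every `k` there is `k₁` such that whenever
`Δ ⊴ Γ` with `Δ` and `Γ ⧸ Δ` in `UE(k)`, the group `Γ` is in `UE(k₁)`. -/
theorem isUEModulus_extension (k : ℕ → ℕ) :
    ∃ k₁ : ℕ → ℕ, ∀ (Γ : Type*) [Group Γ] (Δ : Subgroup Γ) [Δ.Normal],
      IsUEModulus k Δ → IsUEModulus k (Γ ⧸ Δ) → IsUEModulus k₁ Γ := by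
  classical
  refine ⟨UEK k, ?_⟩
  intro Γ _ Δ _ hΔ hQ F hF1 hFsym
  classical
  set n := F.card with hn
  have hn1 : 1 ≤ n := Finset.card_pos.mpr ⟨1, hF1⟩
  set m := UEm n with hmdef
  have hm1 : 1 ≤ m := by
    have : 1 ≤ n ^ 2 := Nat.one_le_pow _ _ (by omega)
    simp only [hmdef, UEm]; omega
  set π : Γ →* Γ ⧸ Δ := QuotientGroup.mk' Δ with hπdef
  have hker : ∀ g : Γ, π g = 1 ↔ g ∈ Δ := fun g => by
    rw [← MonoidHom.mem_ker, QuotientGroup.ker_mk']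
  set AQ : Finset (Γ ⧸ Δ) := F.image π with hAQdef
  have hAQ1 : (1 : Γ ⧸ Δ) ∈ AQ := Finset.mem_image.mpr ⟨1, hF1, map_one π⟩
  have hAQsym : ∀ u ∈ AQ, u⁻¹ ∈ AQ := by
    intro u hu
    rcases Finset.mem_image.mp hu with ⟨t, ht, rfl⟩
    exact Finset.mem_image.mpr ⟨t⁻¹, hFsym t ht, map_inv π t⟩
  obtain ⟨μ, hμpos, hμsupp, hμsum, hμdef⟩ := UE_key hQ AQ hAQ1 hAQsym m hm1
  set Nstar := UENstar k n with hNstardef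
  set L := UEL k n with hLdef
  have hLN : L = Nstar + 1 := rfl
  -- support of μ inside the finset AQ ^ Nstar
  have hμsuppStar : ∀ p, support (μ p) ⊆ ↑(AQ ^ Nstar) := by
    intro p
    refine (hμsupp p).trans ?_
    rw [← Finset.coe_pow]
    refine Finset.coe_subset.mpr (Finset.pow_subset_pow_right hAQ1 ?_)
    have hcard : AQ.card ≤ n := Finset.card_image_le
    exact Finset.le_sup (f := fun a => UENfun k a (UEm n))
      (Finset.mem_range.mpr (by omega))
  -- the section σ
  have hexσ : ∀ q : Γ ⧸ Δ, ∃ g : Γ, π g = q ∧ (q ∈ AQ ^ L → g ∈ F ^ L) := by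
    intro q
    by_cases hq : q ∈ AQ ^ L
    · have himg : (↑(AQ ^ L) : Set (Γ ⧸ Δ)) = π '' ↑(F ^ L) := by
        rw [Finset.coe_pow, hAQdef, Finset.coe_image, ← Set.image_pow, Finset.coe_pow]
      have hq' : (q : Γ ⧸ Δ) ∈ π '' ↑(F ^ L) := by
        rw [← himg]; exact_mod_cast hq
      rcases hq' with ⟨g, hgF, hgq⟩
      exact ⟨g, hgq, fun _ => by exact_mod_cast hgF⟩
    · rcases QuotientGroup.mk'_surjective Δ q with ⟨g, hg⟩
      exact ⟨g, hg, fun h => absurd h hq⟩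
  choose σ hσπ hσF using hexσ
  -- the finite subset of Δ
  set E : Finset Γ := F ^ (2 * L + 1) with hEdef
  set D0 : Finset ↥Δ := E.preimage (Subtype.val) Subtype.val_injective.injOn with hD0def
  have hD0mem : ∀ d : ↥Δ, d ∈ D0 ↔ (d : Γ) ∈ E := fun d => Finset.mem_preimage
  have hD01 : (1 : ↥Δ) ∈ D0 := (hD0mem 1).mpr (by exact_mod_cast Finset.one_mem_pow hF1)
  have hD0sym : ∀ d ∈ D0, d⁻¹ ∈ D0 := by
    intro d hd
    refine (hD0mem _).mpr ?_
    have : ((d : Γ))⁻¹ ∈ E := inv_mem_finset_pow hFsym _ _ ((hD0mem d).mp hd)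
    exact_mod_cast this
  have hD0card : D0.card ≤ UEaux k n := by
    have h1' : D0.card ≤ E.card :=
      Finset.card_le_card_of_injOn Subtype.val (fun d hd => (hD0mem d).mp hd)
        (Subtype.val_injective.injOn)
    have h2' : E.card ≤ n ^ (2 * L + 1) := by
      calc E.card ≤ F.card ^ (2 * L + 1) := Finset.card_pow_le
        _ = n ^ (2 * L + 1) := by rw [hn]
    exact h1'.trans (h2'.trans (le_of_eq rfl))
  obtain ⟨ν, hνpos, hνsupp, hνsum, hνdef⟩ := UE_key hΔ D0 hD01 hD0sym m hm1
  set Nd := UENd k n with hNddef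
  have hνsuppNd : ∀ y, support (ν y) ⊆ ↑(D0 ^ Nd) := by
    intro y
    refine (hνsupp y).trans ?_
    rw [← Finset.coe_pow]
    refine Finset.coe_subset.mpr (Finset.pow_subset_pow_right hD01 ?_)
    exact Finset.le_sup (f := fun a => UENfun k a (UEm n))
      (Finset.mem_range.mpr (by omega))
  -- the cocycle c and the Δ-component dd
  have hcmem : ∀ (x : Γ) (q : Γ ⧸ Δ), (σ q)⁻¹ * x * σ ((π x)⁻¹ * q) ∈ Δ := by
    intro x q
    rw [← hker]
    simp only [map_mul, map_inv, hσπ]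
    group
  set c : Γ → (Γ ⧸ Δ) → ↥Δ := fun x q => ⟨(σ q)⁻¹ * x * σ ((π x)⁻¹ * q), hcmem x q⟩
    with hcdef
  have hcval : ∀ (x : Γ) (q : Γ ⧸ Δ),
      ((c x q : ↥Δ) : Γ) = (σ q)⁻¹ * x * σ ((π x)⁻¹ * q) := fun _ _ => rfl
  have hddmem : ∀ t : Γ, (σ (π t))⁻¹ * t ∈ Δ := by
    intro t
    rw [← hker]
    simp only [map_mul, map_inv, hσπ]
    group
  set dd : Γ → ↥Δ := fun t => ⟨(σ (π t))⁻¹ * t, hddmem t⟩ with hdddef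
  set ψ : (Γ ⧸ Δ) × ↥Δ → Γ := fun p => σ p.1 * (p.2 : Γ) with hψdef
  have hπd : ∀ d : ↥Δ, π (d : Γ) = 1 := fun d => (hker _).mpr d.2
  have hπψ : ∀ p : (Γ ⧸ Δ) × ↥Δ, π (ψ p) = p.1 := by
    intro p
    simp only [hψdef, map_mul, hσπ, hπd, mul_one]
  have hddψ : ∀ p : (Γ ⧸ Δ) × ↥Δ, dd (ψ p) = p.2 := by
    intro p
    apply Subtype.ext
    show (σ (π (ψ p)))⁻¹ * (ψ p) = (p.2 : Γ)
    rw [hπψ p]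
    show (σ p.1)⁻¹ * (σ p.1 * (p.2 : Γ)) = (p.2 : Γ)
    group
  have hψbij : Function.Bijective ψ := by
    constructor
    · intro p p' h
      have h1' : p.1 = p'.1 := by rw [← hπψ p, ← hπψ p', h]
      have h2' : p.2 = p'.2 := by rw [← hddψ p, ← hddψ p', h]
      exact Prod.ext h1' h2'
    · intro t
      refine ⟨(π t, dd t), ?_⟩
      show σ (π t) * ((σ (π t))⁻¹ * t) = t
      group
  set η : Γ → Γ → ℝ := fun x t => μ (π x) (π t) * ν (c x (π t)) (dd t) with hηdef
  have hηψ : ∀ (x : Γ) (p : (Γ ⧸ Δ) × ↥Δ),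
      η x (ψ p) = μ (π x) p.1 * ν (c x p.1) p.2 := by
    intro x p
    simp only [hηdef, hπψ p, hddψ p]
  refine ⟨η, ?_, ?_, ?_, ?_⟩
  · intro x t
    exact mul_nonneg (hμpos _ _) (hνpos _ _)
  · -- support
    intro x t ht
    simp only [mem_support, hηdef, ne_eq, mul_eq_zero, not_or] at ht
    obtain ⟨hμne, hνne⟩ := ht
    have hq : π t ∈ AQ ^ Nstar := by
      have := hμsuppStar (π x) hμne
      exact_mod_cast this
    have hqL : π t ∈ AQ ^ L := Finset.pow_subset_pow_right hAQ1 (by omega) hq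
    have hσt : σ (π t) ∈ F ^ L := hσF _ hqL
    have hd : dd t ∈ D0 ^ Nd := by
      have := hνsuppNd (c x (π t)) hνne
      exact_mod_cast this
    -- push to Γ
    have hdval : ((dd t : ↥Δ) : Γ) ∈ F ^ ((2 * L + 1) * Nd) := by
      have hd' : dd t ∈ ((↑D0 : Set ↥Δ) ^ Nd) := by
        rw [← Finset.coe_pow]; exact_mod_cast hd
      have h1'0 : ((dd t : ↥Δ) : Γ) ∈ (⇑Δ.subtype '' ((↑D0 : Set ↥Δ) ^ Nd)) :=
        ⟨dd t, hd', rfl⟩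
      rw [Set.image_pow] at h1'0
      have h1' : ((dd t : ↥Δ) : Γ) ∈ (⇑Δ.subtype '' (↑D0 : Set ↥Δ)) ^ Nd := h1'0
      have h2' : (⇑Δ.subtype '' (↑D0 : Set ↥Δ)) ⊆ (↑E : Set Γ) := by
        rintro _ ⟨d, hdm, rfl⟩
        exact_mod_cast (hD0mem d).mp (by exact_mod_cast hdm)
      have h3' : ((dd t : ↥Δ) : Γ) ∈ (↑E : Set Γ) ^ Nd :=
        Set.pow_subset_pow_left h2' h1'
      have h4' : (↑E : Set Γ) ^ Nd = ↑(E ^ Nd) := (Finset.coe_pow _ _).symm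
      rw [h4'] at h3'
      have h5' : E ^ Nd = F ^ ((2 * L + 1) * Nd) := by rw [hEdef, ← pow_mul]
      rw [h5'] at h3'
      exact_mod_cast h3'
    have hteq : t = σ (π t) * ((dd t : ↥Δ) : Γ) := by
      show t = σ (π t) * ((σ (π t))⁻¹ * t)
      group
    have : t ∈ F ^ L * F ^ ((2 * L + 1) * Nd) := by
      rw [hteq]; exact Finset.mul_mem_mul hσt hdval
    rw [← pow_add] at this
    have hKeq : L + (2 * L + 1) * Nd = UEK k n := rfl
    rw [hKeq] at this
    rw [← Finset.coe_pow]
    exact_mod_cast this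
  · -- total mass
    intro x
    have hbij := finsum_eq_of_bijective ψ hψbij (fun p => (hηψ x p).symm)
    rw [← hbij]
    have hsupp2 : support (fun p : (Γ ⧸ Δ) × ↥Δ => μ (π x) p.1 * ν (c x p.1) p.2) ⊆
        ↑((AQ ^ Nstar) ×ˢ (D0 ^ Nd)) := by
      rintro ⟨q, d⟩ hp
      simp only [mem_support, ne_eq, mul_eq_zero, not_or] at hp
      simp only [Finset.coe_product, Set.mem_prod]
      exact ⟨by exact_mod_cast hμsuppStar (π x) hp.1, by exact_mod_cast hνsuppNd _ hp.2⟩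
    rw [finsum_eq_sum_of_support_subset _ hsupp2, Finset.sum_product]
    have hinner : ∀ q ∈ AQ ^ Nstar, ∑ d ∈ D0 ^ Nd, μ (π x) q * ν (c x q) d = μ (π x) q := by
      intro q _
      rw [← Finset.mul_sum]
      have : ∑ d ∈ D0 ^ Nd, ν (c x q) d = 1 := by
        rw [← finsum_eq_sum_of_support_subset _ (hνsuppNd (c x q))]
        exact hνsum _
      rw [this, mul_one]
    rw [Finset.sum_congr rfl hinner,
      ← finsum_eq_sum_of_support_subset _ (hμsuppStar (π x))]
    exact hμsum _
  · -- the defect estimate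
    have hNstarL : Nstar ≤ L := by rw [hLN]; omega
    have hmain : ∀ s ∈ F, ∀ x : Γ,
        (∑ᶠ t, |η (s * x) t - η x (s⁻¹ * t)|) ≤ 2 / (m : ℝ) := by
      intro s hs x
      have huAQ : π s ∈ AQ := Finset.mem_image.mpr ⟨s, hs, rfl⟩
      -- membership of the cocycle values
      have hcsD0 : ∀ q : Γ ⧸ Δ, (π s)⁻¹ * q ∈ AQ ^ Nstar → c s q ∈ D0 := by
        intro q hq'
        have hq'L : (π s)⁻¹ * q ∈ AQ ^ L := Finset.pow_subset_pow_right hAQ1 hNstarL hq'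
        have hqL : q ∈ AQ ^ L := by
          have hqe : q = π s * ((π s)⁻¹ * q) := by group
          rw [hqe, hLN, pow_succ']
          exact Finset.mul_mem_mul huAQ hq'
        have hσq : σ q ∈ F ^ L := hσF q hqL
        have hσq' : σ ((π s)⁻¹ * q) ∈ F ^ L := hσF _ hq'L
        refine (hD0mem _).mpr ?_
        show ((c s q : ↥Δ) : Γ) ∈ F ^ (2 * L + 1)
        rw [hcval]
        have h2L : 2 * L + 1 = (L + 1) + L := by omega
        rw [h2L, pow_add, pow_succ]
        exact Finset.mul_mem_mul
          (Finset.mul_mem_mul (inv_mem_finset_pow hFsym L _ hσq) hs) hσq'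
      -- the cocycle identity
      have hcoc : ∀ q : Γ ⧸ Δ, c (s * x) q = c s q * c x ((π s)⁻¹ * q) := by
        intro q
        apply Subtype.ext
        show (σ q)⁻¹ * (s * x) * σ ((π (s * x))⁻¹ * q)
            = ((σ q)⁻¹ * s * σ ((π s)⁻¹ * q))
              * ((σ ((π s)⁻¹ * q))⁻¹ * x * σ ((π x)⁻¹ * ((π s)⁻¹ * q)))
        have harg : (π (s * x))⁻¹ * q = (π x)⁻¹ * ((π s)⁻¹ * q) := by
          rw [map_mul]; group
        rw [harg]
        group
      -- the shift identity
      have hshift : ∀ p : (Γ ⧸ Δ) × ↥Δ,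
          s⁻¹ * ψ p = ψ ((π s)⁻¹ * p.1, (c s p.1)⁻¹ * p.2) := by
        intro p
        show s⁻¹ * (σ p.1 * (p.2 : Γ))
            = σ ((π s)⁻¹ * p.1) * (((c s p.1)⁻¹ * p.2 : ↥Δ) : Γ)
        have hval : (((c s p.1)⁻¹ * p.2 : ↥Δ) : Γ)
            = ((σ p.1)⁻¹ * s * σ ((π s)⁻¹ * p.1))⁻¹ * (p.2 : Γ) := by
          rw [MulMemClass.coe_mul, InvMemClass.coe_inv, hcval]
        rw [hval]
        group
      have hA : ∀ p : (Γ ⧸ Δ) × ↥Δ, η (s * x) (ψ p)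
          = μ (π s * π x) p.1 * ν (c s p.1 * c x ((π s)⁻¹ * p.1)) p.2 := by
        intro p
        rw [hηψ, hcoc, map_mul]
      have hB : ∀ p : (Γ ⧸ Δ) × ↥Δ, η x (s⁻¹ * ψ p)
          = μ (π x) ((π s)⁻¹ * p.1) * ν (c x ((π s)⁻¹ * p.1)) ((c s p.1)⁻¹ * p.2) := by
        intro p
        rw [hshift p, hηψ]
      -- reindex the finsum through ψ
      have hre : (∑ᶠ t, |η (s * x) t - η x (s⁻¹ * t)|)
          = ∑ᶠ p : (Γ ⧸ Δ) × ↥Δ,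
              |μ (π s * π x) p.1 * ν (c s p.1 * c x ((π s)⁻¹ * p.1)) p.2
                - μ (π x) ((π s)⁻¹ * p.1) * ν (c x ((π s)⁻¹ * p.1)) ((c s p.1)⁻¹ * p.2)| := by
        refine (finsum_eq_of_bijective ψ hψbij ?_).symm
        intro p
        rw [hA p, hB p]
      set QS : Finset (Γ ⧸ Δ) := AQ ^ L with hQSdef
      set DS : Finset ↥Δ := D0 ^ (Nd + 1) with hDSdef
      have hsupp3 : support (fun p : (Γ ⧸ Δ) × ↥Δ =>
          |μ (π s * π x) p.1 * ν (c s p.1 * c x ((π s)⁻¹ * p.1)) p.2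
            - μ (π x) ((π s)⁻¹ * p.1) * ν (c x ((π s)⁻¹ * p.1)) ((c s p.1)⁻¹ * p.2)|) ⊆
          ↑(QS ×ˢ DS) := by
        rintro ⟨q, d⟩ hp
        simp only [mem_support, ne_eq] at hp
        have hp' : μ (π s * π x) q * ν (c s q * c x ((π s)⁻¹ * q)) d ≠ 0
            ∨ μ (π x) ((π s)⁻¹ * q) * ν (c x ((π s)⁻¹ * q)) ((c s q)⁻¹ * d) ≠ 0 := by
          by_contra hcon
          push_neg at hcon
          rw [hcon.1, hcon.2, sub_self, abs_zero] at hp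
          exact hp rfl
        simp only [Finset.coe_product, Set.mem_prod]
        rcases hp' with h | h
        · rcases mul_ne_zero_iff.mp h with ⟨h1, h2⟩
          have hq : q ∈ AQ ^ Nstar := by exact_mod_cast hμsuppStar _ h1
          have hd : d ∈ D0 ^ Nd := by exact_mod_cast hνsuppNd _ h2
          constructor
          · exact_mod_cast Finset.pow_subset_pow_right hAQ1 hNstarL hq
          · exact_mod_cast Finset.pow_subset_pow_right hD01 (Nat.le_succ Nd) hd
        · rcases mul_ne_zero_iff.mp h with ⟨h1, h2⟩
          have hq' : (π s)⁻¹ * q ∈ AQ ^ Nstar := by exact_mod_cast hμsuppStar _ h1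
          have hqQS : q ∈ AQ ^ L := by
            have hqe : q = π s * ((π s)⁻¹ * q) := by group
            rw [hqe, hLN, pow_succ']
            exact Finset.mul_mem_mul huAQ
              (Finset.pow_subset_pow_right hAQ1 (by omega) hq')
          have hcs : c s q ∈ D0 := hcsD0 q hq'
          have hd' : (c s q)⁻¹ * d ∈ D0 ^ Nd := by exact_mod_cast hνsuppNd _ h2
          have hdDS : d ∈ D0 ^ (Nd + 1) := by
            have hde : d = c s q * ((c s q)⁻¹ * d) := by group
            rw [hde, pow_succ']
            exact Finset.mul_mem_mul hcs hd'
          exact ⟨by exact_mod_cast hqQS, by exact_mod_cast hdDS⟩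
      rw [hre, finsum_eq_sum_of_support_subset _ hsupp3]
      have hptwise : ∀ p ∈ QS ×ˢ DS,
          |μ (π s * π x) p.1 * ν (c s p.1 * c x ((π s)⁻¹ * p.1)) p.2
            - μ (π x) ((π s)⁻¹ * p.1) * ν (c x ((π s)⁻¹ * p.1)) ((c s p.1)⁻¹ * p.2)|
          ≤ |μ (π s * π x) p.1 - μ (π x) ((π s)⁻¹ * p.1)|
              * ν (c s p.1 * c x ((π s)⁻¹ * p.1)) p.2
            + μ (π x) ((π s)⁻¹ * p.1)
              * |ν (c s p.1 * c x ((π s)⁻¹ * p.1)) p.2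
                  - ν (c x ((π s)⁻¹ * p.1)) ((c s p.1)⁻¹ * p.2)| := by
        intro p _
        have habs : ∀ a b a' b' : ℝ, 0 ≤ b → 0 ≤ a' →
            |a * b - a' * b'| ≤ |a - a'| * b + a' * |b - b'| := by
          intro a b a' b' hb ha'
          have hsplit : a * b - a' * b' = (a - a') * b + a' * (b - b') := by ring
          rw [hsplit]
          refine (abs_add_le _ _).trans ?_
          rw [abs_mul, abs_mul, abs_of_nonneg hb, abs_of_nonneg ha']
        exact habs _ _ _ _ (hνpos _ _) (hμpos _ _)
      refine (Finset.sum_le_sum hptwise).trans ?_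
      rw [Finset.sum_add_distrib]
      have hT1 : (∑ p ∈ QS ×ˢ DS, |μ (π s * π x) p.1 - μ (π x) ((π s)⁻¹ * p.1)|
          * ν (c s p.1 * c x ((π s)⁻¹ * p.1)) p.2) ≤ 1 / (m : ℝ) := by
        rw [Finset.sum_product]
        have hinner : ∀ q ∈ QS,
            (∑ d ∈ DS, |μ (π s * π x) q - μ (π x) ((π s)⁻¹ * q)|
              * ν (c s q * c x ((π s)⁻¹ * q)) d)
            ≤ |μ (π s * π x) q - μ (π x) ((π s)⁻¹ * q)| := by
          intro q _
          rw [← Finset.mul_sum]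
          refine mul_le_of_le_one_right (abs_nonneg _) ?_
          rw [← hνsum (c s q * c x ((π s)⁻¹ * q))]
          exact sum_finset_le_finsum _ (hνsuppNd _) (hνpos _) DS
        refine (Finset.sum_le_sum hinner).trans ?_
        have hsupp4 : support (fun q => |μ (π s * π x) q - μ (π x) ((π s)⁻¹ * q)|) ⊆
            ↑((AQ ^ Nstar) ∪ (AQ ^ Nstar).image (fun q => π s * q)) := by
          intro q hq
          simp only [mem_support, ne_eq, abs_eq_zero, sub_eq_zero] at hq
          by_cases h1 : μ (π s * π x) q = 0
          · by_cases h2 : μ (π x) ((π s)⁻¹ * q) = 0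
            · exact absurd (h1.trans h2.symm) hq
            · have hq' : (π s)⁻¹ * q ∈ AQ ^ Nstar := by exact_mod_cast hμsuppStar _ h2
              simp only [Finset.coe_union, Set.mem_union, Finset.coe_image, Set.mem_image]
              exact Or.inr ⟨(π s)⁻¹ * q, by exact_mod_cast hq', by group⟩
          · have hq1 : q ∈ AQ ^ Nstar := by exact_mod_cast hμsuppStar _ h1
            simp only [Finset.coe_union, Set.mem_union]
            exact Or.inl (by exact_mod_cast hq1)
        exact (sum_finset_le_finsum _ hsupp4 (fun q => abs_nonneg _) QS).trans
          (hμdef (π s) huAQ (π x))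
      have hT2 : (∑ p ∈ QS ×ˢ DS, μ (π x) ((π s)⁻¹ * p.1)
          * |ν (c s p.1 * c x ((π s)⁻¹ * p.1)) p.2
              - ν (c x ((π s)⁻¹ * p.1)) ((c s p.1)⁻¹ * p.2)|) ≤ 1 / (m : ℝ) := by
        rw [Finset.sum_product]
        have hinner : ∀ q ∈ QS,
            (∑ d ∈ DS, μ (π x) ((π s)⁻¹ * q)
              * |ν (c s q * c x ((π s)⁻¹ * q)) d - ν (c x ((π s)⁻¹ * q)) ((c s q)⁻¹ * d)|)
            ≤ μ (π x) ((π s)⁻¹ * q) * (1 / (m : ℝ)) := by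
          intro q _
          rw [← Finset.mul_sum]
          by_cases h0 : μ (π x) ((π s)⁻¹ * q) = 0
          · rw [h0, zero_mul, zero_mul]
          · refine mul_le_mul_of_nonneg_left ?_ (hμpos _ _)
            have hq' : (π s)⁻¹ * q ∈ AQ ^ Nstar := by exact_mod_cast hμsuppStar _ h0
            have hcs : c s q ∈ D0 := hcsD0 q hq'
            have hsupp5 : support (fun d : ↥Δ =>
                |ν (c s q * c x ((π s)⁻¹ * q)) d - ν (c x ((π s)⁻¹ * q)) ((c s q)⁻¹ * d)|) ⊆
                ↑((D0 ^ Nd) ∪ (D0 ^ Nd).image (fun d => c s q * d)) := by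
              intro d hd
              simp only [mem_support, ne_eq, abs_eq_zero, sub_eq_zero] at hd
              by_cases h1 : ν (c s q * c x ((π s)⁻¹ * q)) d = 0
              · by_cases h2 : ν (c x ((π s)⁻¹ * q)) ((c s q)⁻¹ * d) = 0
                · exact absurd (h1.trans h2.symm) hd
                · have hd' : (c s q)⁻¹ * d ∈ D0 ^ Nd := by exact_mod_cast hνsuppNd _ h2
                  simp only [Finset.coe_union, Set.mem_union, Finset.coe_image, Set.mem_image]
                  exact Or.inr ⟨(c s q)⁻¹ * d, by exact_mod_cast hd', by group⟩
              · have hd1 : d ∈ D0 ^ Nd := by exact_mod_cast hνsuppNd _ h1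
                simp only [Finset.coe_union, Set.mem_union]
                exact Or.inl (by exact_mod_cast hd1)
            exact (sum_finset_le_finsum _ hsupp5 (fun d => abs_nonneg _) DS).trans
              (hνdef (c s q) hcs (c x ((π s)⁻¹ * q)))
        refine (Finset.sum_le_sum hinner).trans ?_
        rw [← Finset.sum_mul]
        have hsum1 : (∑ q ∈ QS, μ (π x) ((π s)⁻¹ * q)) ≤ 1 := by
          have hre2 : (∑ q ∈ QS, μ (π x) ((π s)⁻¹ * q))
              = ∑ q ∈ QS.image (fun q => (π s)⁻¹ * q), μ (π x) q := by
            rw [Finset.sum_image (fun a _ b _ h => by simpa using h)]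
          rw [hre2, ← hμsum (π x)]
          exact sum_finset_le_finsum _ (hμsuppStar (π x)) (hμpos _) _
        calc (∑ q ∈ QS, μ (π x) ((π s)⁻¹ * q)) * (1 / (m : ℝ))
            ≤ 1 * (1 / (m : ℝ)) := by
              refine mul_le_mul_of_nonneg_right hsum1 (by positivity)
          _ = 1 / (m : ℝ) := one_mul _
      have h2m : 1 / (m : ℝ) + 1 / (m : ℝ) = 2 / (m : ℝ) := by ring
      linarith [hT1, hT2]
    have hsup : ∀ s ∈ F, (⨆ x : Γ, ∑ᶠ t, |η (s * x) t - η x (s⁻¹ * t)|) ≤ 2 / (m : ℝ) := by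
      intro s hs
      refine Real.iSup_le (fun x => hmain s hs x) (by positivity)
    have hmcast : (m : ℝ) = 2 * (n : ℝ) ^ 2 := by
      rw [hmdef]; unfold UEm; push_cast; ring
    have hncast : (1 : ℝ) ≤ (n : ℝ) := by exact_mod_cast hn1
    have hfin : (∑ s ∈ F, ⨆ x : Γ, ∑ᶠ t, |η (s * x) t - η x (s⁻¹ * t)|)
        ≤ (F.card : ℝ) * (2 / (m : ℝ)) := by
      have h := Finset.sum_le_card_nsmul F
        (fun s => ⨆ x : Γ, ∑ᶠ t, |η (s * x) t - η x (s⁻¹ * t)|)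
        (2 / (m : ℝ)) (fun s hs => hsup s hs)
      rw [nsmul_eq_mul] at h
      exact h
    refine hfin.trans ?_
    rw [hmcast, ← hn]
    have hne : (0 : ℝ) < (n : ℝ) := by linarith
    exact le_of_eq (ue_arith (n : ℝ) hne)
end

section
/- Let Γ be a countable group and Z a Borel Γ-space. Suppose Δ ≤ Γ is a subgroup and Y ⊆ Z is a Δ-invariant Borel subset such that gY ∩ Y = ∅ for every g ∈ Γ \ Δ and such that Γ·Y = Z. If Y is amenable as a Borel Δ-space, then Z is amenable as a Borel Γ-space. -/
open MeasureTheory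

/-- Amenability of a Borel action `act` of a countable group `G` on a Borel space `Z`:
for every finite `F ⊆ G`, every Borel probability measure `m` on `Z`, and every
`ε > 0`, there is a Borel map `η : Z → Prob(G)` with
`∑_{s ∈ F} ∫ ‖η^{s x} - s·η^x‖₁ dm < ε`. -/
def IsAmenableBorelAction (G : Type*) [Group G] (Z : Type*) [MeasurableSpace Z]
    (act : G → Z → Z) : Prop :=
  ∀ (F : Finset G) (m : Measure Z), IsProbabilityMeasure m →
    ∀ ε : ℝ, 0 < ε →
      ∃ η : Z → G → ℝ,
        (∀ t : G, Measurable fun x => η x t) ∧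
        (∀ x t, 0 ≤ η x t) ∧
        (∀ x, ∑' t, η x t = 1) ∧
        ∑ s ∈ F, ∫ x, (∑' t, |η (act s x) t - η x (s⁻¹ * t)|) ∂m < ε

open Set
open scoped ENNReal

lemma exists_finset_capture {Z : Type*} [MeasurableSpace Z] {β : Type*} [Countable β]
    (m : Measure Z) [IsFiniteMeasure m] (f : Z → β)
    (hf : ∀ b : β, MeasurableSet (f ⁻¹' {b})) {δ : ℝ≥0∞} (hδ : 0 < δ) :
    ∃ D : Finset β, m {z | f z ∉ D} < δ := by
  classical
  by_cases h0 : m Set.univ < δ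
  · exact ⟨∅, lt_of_le_of_lt (measure_mono (Set.subset_univ _)) h0⟩
  push_neg at h0
  have hδtop : δ ≠ ⊤ := fun h => (measure_ne_top m Set.univ) (top_le_iff.mp (h ▸ h0))
  have hne : m Set.univ ≠ 0 := fun h => hδ.ne' (le_antisymm (h ▸ h0) zero_le |>.symm ▸ rfl)
  have hdisj : Pairwise (Function.onFun Disjoint fun b : β => f ⁻¹' {b}) := by
    intro a b hab
    exact Set.disjoint_left.2 (by rintro z (rfl : f z = a) (rfl : f z = b); exact hab rfl)
  have hsum : ∑' b : β, m (f ⁻¹' {b}) = m Set.univ := by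
    rw [show (Set.univ : Set Z) = ⋃ b : β, f ⁻¹' {b} by ext z; simp]
    · exact (measure_iUnion hdisj fun b => hf b).symm
  have hlt : m Set.univ - δ < ⨆ D : Finset β, ∑ b ∈ D, m (f ⁻¹' {b}) := by
    rw [← ENNReal.tsum_eq_iSup_sum, hsum]
    exact ENNReal.sub_lt_self (measure_ne_top m _) hne hδ.ne'
  obtain ⟨D, hD⟩ := lt_iSup_iff.mp hlt
  refine ⟨D, ?_⟩
  have hswap : {z | f z ∉ D} = (⋃ b ∈ D, f ⁻¹' {b})ᶜ := by
    ext z; simp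
  have hmeasU : MeasurableSet (⋃ b ∈ D, f ⁻¹' {b}) :=
    MeasurableSet.biUnion D.countable_toSet fun b _ => hf b
  have hDm : ∑ b ∈ D, m (f ⁻¹' {b}) = m (⋃ b ∈ D, f ⁻¹' {b}) :=
    (measure_biUnion_finset (hdisj.set_pairwise _) fun b _ => hf b).symm
  rw [hswap, measure_compl hmeasU (measure_ne_top m _)]
  rw [hDm] at hD
  have hle : m (⋃ b ∈ D, f ⁻¹' {b}) ≤ m Set.univ := measure_mono (Set.subset_univ _)
  rw [ENNReal.sub_lt_iff_lt_right (measure_ne_top m _) hle]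
  calc m Set.univ < (m (⋃ b ∈ D, f ⁻¹' {b})) + δ := by
        rw [← ENNReal.sub_lt_iff_lt_right hδtop h0] at *
        · exact hD
  _ = δ + m (⋃ b ∈ D, f ⁻¹' {b}) := add_comm _ _

set_option maxHeartbeats 1000000 in
/-- Let `Γ` be a countable group and `Z` a Borel `Γ`-space.  If `Δ ≤ Γ` is a subgroup
and `Y ⊆ Z` a `Δ`-invariant Borel subset with `gY ∩ Y = ∅` for `g ∉ Δ` and `Γ·Y = Z`,
and if `Y` is amenable as a Borel `Δ`-space (via the restricted action `actY`), then
`Z` is amenable as a Borel `Γ`-space. -/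
theorem borelAmenable_of_fundamental_domain
    (Γ : Type*) [Group Γ] [Countable Γ]
    (Z : Type*) [MeasurableSpace Z] [StandardBorelSpace Z]
    [MulAction Γ Z] (hmeas : ∀ g : Γ, Measurable fun z : Z => g • z)
    (Δ : Subgroup Γ) (Y : Set Z) (hYmeas : MeasurableSet Y)
    (hYinv : ∀ g ∈ Δ, ∀ y ∈ Y, g • y ∈ Y)
    (hdisj : ∀ g : Γ, g ∉ Δ → Disjoint ((fun y => g • y) '' Y) Y)
    (hcover : ∀ z : Z, ∃ g : Γ, ∃ y ∈ Y, g • y = z)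
    (actY : Δ → Y → Y)
    (hactY : ∀ (g : Δ) (y : Y), (actY g y : Z) = (g : Γ) • (y : Z))
    (hYamen : IsAmenableBorelAction Δ Y actY) :
    IsAmenableBorelAction Γ Z (fun g z => g • z) := by
  classical
  intro F m hm ε hε
  haveI : Nonempty Γ := ⟨1⟩
  obtain ⟨e, he⟩ := exists_surjective_nat Γ
  have hex : ∀ z : Z, ∃ n : ℕ, (e n)⁻¹ • z ∈ Y := by
    intro z
    obtain ⟨g, y, hy, rfl⟩ := hcover z
    obtain ⟨n, rfl⟩ := he g
    exact ⟨n, by simpa [inv_smul_smul] using hy⟩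
  set N : Z → ℕ := fun z => Nat.find (hex z) with hNdef
  have hN : Measurable N := measurable_find hex fun k => (hmeas (e k)⁻¹) hYmeas
  set σ : Z → Γ := fun z => e (N z) with hσdef
  have hσY : ∀ z, (σ z)⁻¹ • z ∈ Y := fun z => Nat.find_spec (hex z)
  set π : Z → Y := fun z => ⟨(σ z)⁻¹ • z, hσY z⟩ with hπdef
  have hπ : Measurable π := by
    apply Measurable.subtype_mk
    have h1 : Measurable fun p : Z × ℕ => (e p.2)⁻¹ • p.1 :=
      measurable_from_prod_countable_left fun n => hmeas (e n)⁻¹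
    exact h1.comp (measurable_id.prodMk hN)
  have hmemΔ : ∀ (g : Γ) (y : Z), y ∈ Y → g • y ∈ Y → g ∈ Δ := by
    intro g y hy hgy
    by_contra hg
    exact Set.disjoint_left.mp (hdisj g hg) ⟨y, hy, rfl⟩ hgy
  have hcmem : ∀ (s : Γ) (z : Z), (σ (s • z))⁻¹ * s * σ z ∈ Δ := by
    intro s z
    have h1 : ((σ (s • z))⁻¹ * s * σ z) • ((σ z)⁻¹ • z) = (σ (s • z))⁻¹ • (s • z) := by
      rw [smul_smul, smul_smul]; congr 1; group
    exact hmemΔ _ _ (hσY z) (h1 ▸ hσY (s • z))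
  set c : Γ → Z → Δ := fun s z => ⟨(σ (s • z))⁻¹ * s * σ z, hcmem s z⟩ with hcdef
  have hπe : ∀ (s : Γ) (z : Z), π (s • z) = actY (c s z) (π z) := by
    intro s z
    apply Subtype.ext
    rw [hactY]
    show (σ (s • z))⁻¹ • (s • z) = ((σ (s • z))⁻¹ * s * σ z) • ((σ z)⁻¹ • z)
    rw [smul_smul, smul_smul]; congr 1; group
  letI : MeasurableSpace Δ := ⊤
  haveI : MeasurableSingletonClass Δ := ⟨fun _ => trivial⟩
  have hc : ∀ s : Γ, Measurable (c s) := by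
    intro s
    apply measurable_to_countable'
    intro d
    have hset : c s ⁻¹' {d} = ⋃ (n : ℕ) (k : ℕ) (_ : (e k)⁻¹ * s * e n = (d : Γ)),
        (N ⁻¹' {n} ∩ (fun z => N (s • z)) ⁻¹' {k}) := by
      ext z
      simp only [Set.mem_preimage, Set.mem_singleton_iff, Set.mem_iUnion, Set.mem_inter_iff]
      constructor
      · intro h
        refine ⟨N z, N (s • z), ?_, rfl, rfl⟩
        rw [← congrArg Subtype.val h]
      · rintro ⟨n, k, hnk, hn, hk⟩
        apply Subtype.ext
        show (σ (s • z))⁻¹ * s * σ z = (d : Γ)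
        rw [hσdef]
        simp only [hn, hk]
        exact hnk
    rw [hset]
    refine MeasurableSet.iUnion fun n => MeasurableSet.iUnion fun k =>
      MeasurableSet.iUnion fun _ => MeasurableSet.inter ?_ ?_
    · exact hN (measurableSet_singleton n)
    · exact (hN.comp (hmeas s)) (measurableSet_singleton k)
  -- truncation finsets
  set δ₀ : ℝ := ε / (4 * (F.card + 1)) with hδ₀def
  have hδ₀pos : 0 < δ₀ := by positivity
  have hDs : ∀ s : Γ, ∃ D : Finset Δ, m {z | c s z ∉ D} < ENNReal.ofReal δ₀ := fun s =>
    exists_finset_capture m (c s) (fun d => hc s (measurableSet_singleton d))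
      (ENNReal.ofReal_pos.mpr hδ₀pos)
  choose D hD using hDs
  set D₀ : Finset Δ := F.biUnion fun s => D s with hD₀def
  have hD₀ : ∀ s ∈ F, m {z | c s z ∉ D₀} < ENNReal.ofReal δ₀ := by
    intro s hs
    refine lt_of_le_of_lt (measure_mono ?_) (hD s)
    intro z hz
    exact fun hmem => hz (Finset.mem_biUnion.mpr ⟨s, hs, hmem⟩)
  -- apply amenability on Y
  set m' : Measure Y := m.map π with hm'def
  haveI : IsProbabilityMeasure m' := Measure.isProbabilityMeasure_map hπ.aemeasurable
  set ε₁ : ℝ := ε / (2 * (F.card + 1)) with hε₁def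
  have hε₁pos : 0 < ε₁ := by positivity
  obtain ⟨η', hη'meas, hη'nonneg, hη'sum, hη'conc⟩ := hYamen D₀ m' ‹_› ε₁ hε₁pos
  have hsummable : ∀ y : Y, Summable (η' y) := by
    intro y
    by_contra h
    have := hη'sum y
    rw [tsum_eq_zero_of_not_summable h] at this
    norm_num at this
  -- the function on Z
  set η : Z → Γ → ℝ :=
    fun z t => if h : (σ z)⁻¹ * t ∈ Δ then η' (π z) ⟨(σ z)⁻¹ * t, h⟩ else 0 with hηdef
  have hη_eq : ∀ (z : Z) (t : Γ) (d : Δ), (σ z)⁻¹ * t = (d : Γ) → η z t = η' (π z) d := by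
    intro z t d hd
    have hmem : (σ z)⁻¹ * t ∈ Δ := hd ▸ d.2
    rw [hηdef]
    simp only
    rw [dif_pos hmem]
    exact congrArg (η' (π z)) (Subtype.ext hd)
  have hη_zero : ∀ (z : Z) (t : Γ), (σ z)⁻¹ * t ∉ Δ → η z t = 0 := by
    intro z t h
    rw [hηdef]
    simp only
    rw [dif_neg h]
  have hηnonneg : ∀ z t, 0 ≤ η z t := by
    intro z t
    rw [hηdef]
    simp only
    split
    · exact hη'nonneg _ _
    · exact le_rfl
  -- measurability of η in z
  have hηmeas : ∀ t : Γ, Measurable fun z => η z t := by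
    intro t
    have hg : Measurable fun p : Y × ℕ =>
        if h : (e p.2)⁻¹ * t ∈ Δ then η' p.1 ⟨(e p.2)⁻¹ * t, h⟩ else 0 := by
      apply measurable_from_prod_countable_left
      intro n
      by_cases h : (e n)⁻¹ * t ∈ Δ
      · simpa only [dif_pos h] using hη'meas ⟨(e n)⁻¹ * t, h⟩
      · simpa only [dif_neg h] using measurable_const
    have : (fun z => η z t) = fun z =>
        (fun p : Y × ℕ =>
          if h : (e p.2)⁻¹ * t ∈ Δ then η' p.1 ⟨(e p.2)⁻¹ * t, h⟩ else 0) (π z, N z) := rfl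
    rw [this]
    exact hg.comp (hπ.prodMk hN)
  -- sum one
  have hηsum : ∀ z : Z, ∑' t : Γ, η z t = 1 := by
    intro z
    have hi : Function.Injective fun d : Δ => σ z * (d : Γ) := by
      intro a b hab
      exact Subtype.ext (mul_left_cancel hab)
    have hsupp : Function.support (η z) ⊆ Set.range fun d : Δ => σ z * (d : Γ) := by
      intro t ht
      by_cases h : (σ z)⁻¹ * t ∈ Δ
      · exact ⟨⟨(σ z)⁻¹ * t, h⟩, by simp⟩
      · exact absurd (hη_zero z t h) ht
    have := hi.tsum_eq (f := η z) hsupp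
    rw [← this]
    rw [show (∑' d : Δ, η z (σ z * (d : Γ))) = ∑' d : Δ, η' (π z) d from
      tsum_congr fun d => hη_eq z _ d (by group)]
    exact hη'sum (π z)
  -- G
  set G : Δ → Y → ℝ := fun d y => ∑' u : Δ, |η' (actY d y) u - η' y (d⁻¹ * u)| with hGdef
  have hsummable2 : ∀ (y : Y) (d : Δ), Summable fun u : Δ => η' y (d⁻¹ * u) := by
    intro y d
    exact (((Equiv.mulLeft (d⁻¹ : Δ)).summable_iff (f := η' y)).mpr
      (hsummable y)).congr fun u => rfl
  have hGsummable : ∀ (d : Δ) (y : Y),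
      Summable fun u : Δ => |η' (actY d y) u - η' y (d⁻¹ * u)| := by
    intro d y
    refine Summable.of_nonneg_of_le (fun u => abs_nonneg _) (fun u => ?_)
      ((hsummable (actY d y)).add (hsummable2 y d))
    calc |η' (actY d y) u - η' y (d⁻¹ * u)| ≤ |η' (actY d y) u| + |η' y (d⁻¹ * u)| :=
          abs_sub _ _
      _ = η' (actY d y) u + η' y (d⁻¹ * u) := by
          rw [abs_of_nonneg (hη'nonneg _ _), abs_of_nonneg (hη'nonneg _ _)]
  have hGnonneg : ∀ (d : Δ) (y : Y), 0 ≤ G d y :=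
    fun d y => tsum_nonneg fun u => abs_nonneg _
  have hGle2 : ∀ (d : Δ) (y : Y), G d y ≤ 2 := by
    intro d y
    have h1 : G d y ≤ ∑' u : Δ, (η' (actY d y) u + η' y (d⁻¹ * u)) := by
      refine Summable.tsum_le_tsum (fun u => ?_) (hGsummable d y)
        ((hsummable (actY d y)).add (hsummable2 y d))
      calc |η' (actY d y) u - η' y (d⁻¹ * u)| ≤ |η' (actY d y) u| + |η' y (d⁻¹ * u)| :=
            abs_sub _ _
        _ = η' (actY d y) u + η' y (d⁻¹ * u) := by
            rw [abs_of_nonneg (hη'nonneg _ _), abs_of_nonneg (hη'nonneg _ _)]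
    have h2 : ∑' u : Δ, (η' (actY d y) u + η' y (d⁻¹ * u))
        = (∑' u : Δ, η' (actY d y) u) + ∑' u : Δ, η' y (d⁻¹ * u) :=
      Summable.tsum_add (hsummable (actY d y)) (hsummable2 y d)
    have h3 : (∑' u : Δ, η' y (d⁻¹ * u)) = 1 := by
      have := (Equiv.mulLeft (d⁻¹ : Δ)).tsum_eq (η' y)
      calc (∑' u : Δ, η' y (d⁻¹ * u)) = ∑' u : Δ, η' y ((Equiv.mulLeft (d⁻¹ : Δ)) u) :=
            tsum_congr fun u => rfl
        _ = ∑' u : Δ, η' y u := this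
        _ = 1 := hη'sum y
    rw [h2, h3, hη'sum (actY d y)] at h1
    norm_num at h1
    exact h1
  -- measurability of actY and G
  have hactYmeas : ∀ d : Δ, Measurable (actY d) := by
    intro d
    have heq : (fun y : Y => actY d y)
        = fun y : Y => (⟨(d : Γ) • (y : Z), hYinv d d.2 y y.2⟩ : Y) := by
      funext y
      exact Subtype.ext (hactY d y)
    have h2 : Measurable fun y : Y => (⟨(d : Γ) • (y : Z), hYinv d d.2 y y.2⟩ : Y) :=
      Measurable.subtype_mk ((hmeas (d : Γ)).comp measurable_subtype_coe)
    rw [show actY d = fun y : Y => (⟨(d : Γ) • (y : Z), hYinv d d.2 y y.2⟩ : Y) from heq]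
    exact h2
  have hGmeas : ∀ d : Δ, Measurable (G d) := by
    intro d
    have habs : ∀ u : Δ, Measurable fun y : Y => |η' (actY d y) u - η' y (d⁻¹ * u)| :=
      fun u => (((hη'meas u).comp (hactYmeas d)).sub (hη'meas (d⁻¹ * u))).abs
    have heq : G d = fun y =>
        (∑' u : Δ, ENNReal.ofReal |η' (actY d y) u - η' y (d⁻¹ * u)|).toReal := by
      funext y
      rw [← ENNReal.ofReal_tsum_of_nonneg (fun u => abs_nonneg _) (hGsummable d y),
        ENNReal.toReal_ofReal (tsum_nonneg fun u => abs_nonneg _)]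
    rw [heq]
    exact (Measurable.ennreal_tsum fun u =>
      ENNReal.measurable_ofReal.comp (habs u)).ennreal_toReal
  -- key identity
  have hkey : ∀ (s : Γ) (z : Z),
      (∑' t : Γ, |η (s • z) t - η z (s⁻¹ * t)|) = G (c s z) (π z) := by
    intro s z
    have hi : Function.Injective fun u : Δ => σ (s • z) * (u : Γ) := by
      intro a b hab
      exact Subtype.ext (mul_left_cancel hab)
    have hsupp : (Function.support fun t => |η (s • z) t - η z (s⁻¹ * t)|)
        ⊆ Set.range fun u : Δ => σ (s • z) * (u : Γ) := by
      intro t ht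
      by_cases h : (σ (s • z))⁻¹ * t ∈ Δ
      · exact ⟨⟨(σ (s • z))⁻¹ * t, h⟩, by simp⟩
      · exfalso
        apply ht
        show |η (s • z) t - η z (s⁻¹ * t)| = 0
        have h2 : (σ z)⁻¹ * (s⁻¹ * t) ∉ Δ := by
          intro h3
          apply h
          have h4 : ((c s z : Γ)) * ((σ z)⁻¹ * (s⁻¹ * t)) ∈ Δ := Δ.mul_mem (c s z).2 h3
          have h5 : ((c s z : Γ)) * ((σ z)⁻¹ * (s⁻¹ * t)) = (σ (s • z))⁻¹ * t := by
            show ((σ (s • z))⁻¹ * s * σ z) * ((σ z)⁻¹ * (s⁻¹ * t)) = (σ (s • z))⁻¹ * t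
            group
          rwa [h5] at h4
        rw [hη_zero (s • z) t h, hη_zero z (s⁻¹ * t) h2, sub_zero, abs_zero]
    have hval : ∀ u : Δ, |η (s • z) (σ (s • z) * (u : Γ)) - η z (s⁻¹ * (σ (s • z) * (u : Γ)))|
        = |η' (actY (c s z) (π z)) u - η' (π z) ((c s z)⁻¹ * u)| := by
      intro u
      have e1 : η (s • z) (σ (s • z) * (u : Γ)) = η' (actY (c s z) (π z)) u := by
        rw [hη_eq (s • z) _ u (by group), hπe]
      have e2 : η z (s⁻¹ * (σ (s • z) * (u : Γ))) = η' (π z) ((c s z)⁻¹ * u) := by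
        apply hη_eq z _ ((c s z)⁻¹ * u)
        show (σ z)⁻¹ * (s⁻¹ * (σ (s • z) * (u : Γ)))
          = ((σ (s • z))⁻¹ * s * σ z)⁻¹ * (u : Γ)
        group
      rw [e1, e2]
    rw [← hi.tsum_eq (f := fun t => |η (s • z) t - η z (s⁻¹ * t)|) hsupp]
    exact tsum_congr hval
  -- integrability
  set φ : Γ → Z → ℝ := fun s z => G (c s z) (π z) with hφdef
  have hφmeas : ∀ s, Measurable (φ s) := by
    intro s
    have h1 : Measurable fun p : Y × Δ => G p.2 p.1 :=
      measurable_from_prod_countable_left fun d => hGmeas d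
    exact h1.comp (hπ.prodMk (hc s))
  have hφnonneg : ∀ s z, 0 ≤ φ s z := fun s z => hGnonneg _ _
  have hφle2 : ∀ s z, φ s z ≤ 2 := fun s z => hGle2 _ _
  have hφint : ∀ s, Integrable (φ s) m := by
    intro s
    refine (integrable_const (2 : ℝ)).mono' (hφmeas s).aestronglyMeasurable ?_
    refine ae_of_all _ fun z => ?_
    rw [Real.norm_eq_abs, abs_of_nonneg (hφnonneg s z)]
    exact hφle2 s z
  set hh : Z → ℝ := fun z => ∑ d ∈ D₀, G d (π z) with hhdef
  have hGint : ∀ d : Δ, Integrable (fun z => G d (π z)) m := by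
    intro d
    refine (integrable_const (2 : ℝ)).mono' ((hGmeas d).comp hπ).aestronglyMeasurable ?_
    refine ae_of_all _ fun z => ?_
    rw [Real.norm_eq_abs, abs_of_nonneg (hGnonneg d (π z))]
    exact hGle2 d (π z)
  have hhint : Integrable hh m := integrable_finset_sum D₀ fun d _ => hGint d
  have hhnonneg : ∀ z, 0 ≤ hh z := fun z => Finset.sum_nonneg fun d _ => hGnonneg d _
  have hinth : ∫ z, hh z ∂m < ε₁ := by
    have h1 : ∫ z, hh z ∂m = ∑ d ∈ D₀, ∫ z, G d (π z) ∂m :=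
      integral_finset_sum D₀ fun d _ => hGint d
    rw [h1]
    calc ∑ d ∈ D₀, ∫ z, G d (π z) ∂m = ∑ d ∈ D₀, ∫ y, G d y ∂m' :=
          Finset.sum_congr rfl fun d _ =>
            (integral_map hπ.aemeasurable (hGmeas d).aestronglyMeasurable).symm
      _ < ε₁ := hη'conc
  -- per-element estimate
  have hper : ∀ s ∈ F, ∫ z, φ s z ∂m ≤ ε₁ + 2 * δ₀ := by
    intro s hs
    set B : Set Z := {z | c s z ∉ D₀} with hBdef
    have hBmeas : MeasurableSet B := hc s (show MeasurableSet {d : Δ | d ∉ D₀} from trivial)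
    have hsplit : ∫ z in B, φ s z ∂m + ∫ z in Bᶜ, φ s z ∂m = ∫ z, φ s z ∂m :=
      integral_add_compl hBmeas (hφint s)
    have hB1 : ∫ z in B, φ s z ∂m ≤ 2 * δ₀ := by
      have h1 : ∫ z in B, φ s z ∂m ≤ ∫ z in B, (2 : ℝ) ∂m :=
        setIntegral_mono_on ((hφint s).integrableOn)
          (integrableOn_const (measure_ne_top m B)) hBmeas fun z _ => hφle2 s z
      have h2 : ∫ z in B, (2 : ℝ) ∂m = (m B).toReal * 2 := by
        rw [setIntegral_const]
        simp [smul_eq_mul]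
        rfl
      have h3 : (m B).toReal ≤ δ₀ :=
        ENNReal.toReal_le_of_le_ofReal hδ₀pos.le (hD₀ s hs).le
      calc ∫ z in B, φ s z ∂m ≤ (m B).toReal * 2 := h2 ▸ h1
        _ ≤ δ₀ * 2 := by nlinarith [ENNReal.toReal_nonneg (a := m B)]
        _ = 2 * δ₀ := by ring
    have hB2 : ∫ z in Bᶜ, φ s z ∂m ≤ ∫ z, hh z ∂m := by
      have h1 : ∫ z in Bᶜ, φ s z ∂m ≤ ∫ z in Bᶜ, hh z ∂m := by
        refine setIntegral_mono_on ((hφint s).integrableOn) (hhint.integrableOn)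
          hBmeas.compl fun z hz => ?_
        have hmem : c s z ∈ D₀ := not_not.mp hz
        exact Finset.single_le_sum (fun d _ => hGnonneg d (π z)) hmem
      exact h1.trans (setIntegral_le_integral hhint (ae_of_all _ hhnonneg))
    calc ∫ z, φ s z ∂m = ∫ z in B, φ s z ∂m + ∫ z in Bᶜ, φ s z ∂m := hsplit.symm
      _ ≤ 2 * δ₀ + ∫ z, hh z ∂m := add_le_add hB1 hB2
      _ ≤ 2 * δ₀ + ε₁ := by linarith [hinth]
      _ = ε₁ + 2 * δ₀ := by ring
  -- conclude
  refine ⟨η, hηmeas, hηnonneg, hηsum, ?_⟩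
  have hrw : ∀ s ∈ F, (∫ x, (∑' t : Γ, |η ((fun g (z : Z) => g • z) s x) t - η x (s⁻¹ * t)|) ∂m)
      = ∫ z, φ s z ∂m := by
    intro s _
    refine integral_congr_ae (ae_of_all _ fun z => ?_)
    exact hkey s z
  calc ∑ s ∈ F, ∫ x, (∑' t : Γ, |η ((fun g (z : Z) => g • z) s x) t - η x (s⁻¹ * t)|) ∂m
      = ∑ s ∈ F, ∫ z, φ s z ∂m := Finset.sum_congr rfl hrw
    _ ≤ ∑ s ∈ F, (ε₁ + 2 * δ₀) := Finset.sum_le_sum hper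
    _ = F.card * (ε₁ + 2 * δ₀) := by rw [Finset.sum_const]; ring
    _ < ε := by
        have hcard : (0 : ℝ) ≤ (F.card : ℝ) := Nat.cast_nonneg _
        have hpos : (0 : ℝ) < (F.card : ℝ) + 1 := by linarith
        have h1 : ε₁ = ε / ((F.card : ℝ) + 1) / 2 := by
          rw [hε₁def, div_div, mul_comm]
        have h2 : δ₀ = ε / ((F.card : ℝ) + 1) / 4 := by
          rw [hδ₀def, div_div, mul_comm]
        have he : ε₁ + 2 * δ₀ = ε / ((F.card : ℝ) + 1) := by
          rw [h1, h2]; ring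
        rw [he, ← mul_div_assoc, div_lt_iff₀ hpos]
        nlinarith [hε]
end
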